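/- arXiv:2303.12850 — 2 statements merged into one kernel-verified Lean document; each statement's English description precedes it below -/
import Mathlib

section
/- Let G=(V,E) be a finite undirected graph that is not a pseudoforest. For every extreme point x of the weak density polyhedron P_WD(G), there exists a vertex u ∈ V such that x_u ≥ 1/3. -/
/- Common definitions for the polyhedral study of FVS / PFDS. -/

open scoped Classical
open Finset

namespace FVS

noncomputable section

variable {V : Type*}

/-- Degree of `u` in the subgraph of `G` induced on the vertex set `S`. -/
def degIn [Fintype V] (G : SimpleGraph V) (S : Finset V) (u : V) : ℕ :=
  (S.filter fun v => G.Adj u v).card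

/-- Number of edges of `G` with both endpoints in `S`, i.e. `|E[S]|`. -/
def edgesIn [Fintype V] (G : SimpleGraph V) (S : Finset V) : ℕ :=
  (G.edgeFinset.filter fun e => ∀ v ∈ e, v ∈ S).card

/-- A finite graph is a pseudoforest if each connected component has at most as many
edges as vertices. -/
def IsPseudoforest {W : Type*} [Fintype W] (H : SimpleGraph W) : Prop :=
  ∀ C : H.ConnectedComponent,
    (H.edgeFinset.filter fun e => ∀ v ∈ e, H.connectedComponentMk v = C).card ≤
      (Finset.univ.filter fun v => H.connectedComponentMk v = C).card

/-- `U` is a pseudoforest deletion set for `G`: `G - U` is a pseudoforest. -/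
def IsPFDS [Fintype V] (G : SimpleGraph V) (U : Finset V) : Prop :=
  IsPseudoforest (G.induce {v : V | v ∉ U})

/-- `F` is a feedback vertex set for `G`: `G - F` is acyclic. -/
def IsFVS [Fintype V] (G : SimpleGraph V) (F : Finset V) : Prop :=
  (G.induce {v : V | v ∉ F}).IsAcyclic

/-- Membership in the orientation polyhedron `P_orient(G)`: for every edge `e = uv`,
`x_u + x_v + y_{e,u} + y_{e,v} ≥ 1`; for every vertex `u`,
`x_u + Σ_{e ∈ δ(u)} y_{e,u} ≤ 1`; and all variables are nonnegative.  The variables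
`y e u` for pairs `(e, u)` where `e` is not an edge of `G` or `u` is not an endpoint
of `e` do not occur in the formulation and are pinned to `0`. -/
def POrient [Fintype V] (G : SimpleGraph V) (x : V → ℝ) (y : Sym2 V → V → ℝ) : Prop :=
  (∀ u v, G.Adj u v → 1 ≤ x u + x v + y s(u, v) u + y s(u, v) v) ∧
  (∀ u, x u + ∑ e ∈ G.edgeFinset.filter (fun e => u ∈ e), y e u ≤ 1) ∧
  (∀ u, 0 ≤ x u) ∧
  (∀ e u, 0 ≤ y e u) ∧
  (∀ e u, ¬ (e ∈ G.edgeSet ∧ u ∈ e) → y e u = 0)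

/-- Membership in `Q_orient(G)`, the projection of `P_orient(G)` to the `x`-variables. -/
def QOrient [Fintype V] (G : SimpleGraph V) (x : V → ℝ) : Prop :=
  ∃ y : Sym2 V → V → ℝ, POrient G x y

/-- Membership in the weak density polyhedron `P_WD(G)`:
`x ≥ 0` and `Σ_{u ∈ S} (d_S(u) - 1) x_u ≥ |E[S]| - |S|` for every `S ⊆ V`. -/
def PWD [Fintype V] (G : SimpleGraph V) (x : V → ℝ) : Prop :=
  (∀ u, 0 ≤ x u) ∧
  ∀ S : Finset V, (edgesIn G S : ℝ) - S.card ≤ ∑ u ∈ S, ((degIn G S u : ℝ) - 1) * x u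

/-- Membership in the strong density polyhedron `P_SD(G)`:
`x ≥ 0` and `Σ_{u ∈ S} (d_S(u) - 1) x_u ≥ |E[S]| - |S| + 1` whenever `E[S] ≠ ∅`. -/
def PSD [Fintype V] (G : SimpleGraph V) (x : V → ℝ) : Prop :=
  (∀ u, 0 ≤ x u) ∧
  ∀ S : Finset V, edgesIn G S ≠ 0 →
    (edgesIn G S : ℝ) - S.card + 1 ≤ ∑ u ∈ S, ((degIn G S u : ℝ) - 1) * x u

/-- The induced subgraph `G[U]` is a cycle: it is connected and `2`-regular. -/
def IsInducedCycle [Fintype V] (G : SimpleGraph V) (U : Finset V) : Prop :=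
  (G.induce (U : Set V)).Connected ∧ ∀ u ∈ U, degIn G U u = 2

/-- Membership in the cycle cover polyhedron `P_cycle-cover(G)`. -/
def PCycleCover [Fintype V] (G : SimpleGraph V) (x : V → ℝ) : Prop :=
  (∀ u, 0 ≤ x u) ∧ ∀ U : Finset V, IsInducedCycle G U → 1 ≤ ∑ u ∈ U, x u

/-- The induced subgraph `G[U]` is a `2`-pseudotree: connected with at least `|U| + 1` edges. -/
def Is2PseudotreeInduced [Fintype V] (G : SimpleGraph V) (U : Finset V) : Prop :=
  (G.induce (U : Set V)).Connected ∧ U.card + 1 ≤ edgesIn G U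

/-- Membership in the `2`-pseudotree cover polyhedron `P_2PT-cover(G)`. -/
def P2PTCover [Fintype V] (G : SimpleGraph V) (x : V → ℝ) : Prop :=
  (∀ u, 0 ≤ x u) ∧ ∀ U : Finset V, Is2PseudotreeInduced G U → 1 ≤ ∑ u ∈ U, x u

/-- `(x, y)` is an extreme point of `P_orient(G)`: it is feasible and is not a proper
convex combination of two distinct points of `P_orient(G)`. -/
def POrientExtreme [Fintype V] (G : SimpleGraph V) (x : V → ℝ) (y : Sym2 V → V → ℝ) : Prop :=
  POrient G x y ∧
    ∀ (x₁ x₂ : V → ℝ) (y₁ y₂ : Sym2 V → V → ℝ) (t : ℝ),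
      POrient G x₁ y₁ → POrient G x₂ y₂ → 0 < t → t < 1 →
      (∀ v, x v = t * x₁ v + (1 - t) * x₂ v) →
      (∀ e u, y e u = t * y₁ e u + (1 - t) * y₂ e u) →
      x₁ = x₂ ∧ y₁ = y₂

/-- `(x, y)` is a minimal point of `P_orient(G)`: decreasing any single coordinate by
any `ε > 0`, keeping the other coordinates unchanged, yields a point outside the
polyhedron. -/
def POrientMinimal [Fintype V] (G : SimpleGraph V) (x : V → ℝ) (y : Sym2 V → V → ℝ) : Prop :=
  (∀ v, ∀ ε : ℝ, 0 < ε → ¬ POrient G (Function.update x v (x v - ε)) y) ∧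
  (∀ e u, ∀ ε : ℝ, 0 < ε →
    ¬ POrient G x (fun e' u' => if e' = e ∧ u' = u then y e u - ε else y e' u'))

/-- `x` is an extreme point of `P_WD(G)`: it is feasible and is not a proper convex
combination of two distinct points of `P_WD(G)`. -/
def PWDExtreme [Fintype V] (G : SimpleGraph V) (x : V → ℝ) : Prop :=
  PWD G x ∧
    ∀ (x₁ x₂ : V → ℝ) (t : ℝ), PWD G x₁ → PWD G x₂ → 0 < t → t < 1 →
      (∀ v, x v = t * x₁ v + (1 - t) * x₂ v) → x₁ = x₂

/-- The support graph `H(y)`: the bipartite graph on `V(G) ⊕ E(G)` joining a vertex `v`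
to an edge `e` whenever `v` is an endpoint of the edge `e` of `G` and `y e v > 0`. -/
def supportGraph [Fintype V] (G : SimpleGraph V) (y : Sym2 V → V → ℝ) :
    SimpleGraph (V ⊕ Sym2 V) :=
  SimpleGraph.fromRel fun a b =>
    ∃ v e, a = Sum.inl v ∧ b = Sum.inr e ∧ e ∈ G.edgeSet ∧ v ∈ e ∧ 0 < y e v

/-- The edge `e` lies on some cycle of `G`. -/
def OnCycle (G : SimpleGraph V) (e : Sym2 V) : Prop :=
  ∃ (u : V) (w : G.Walk u u), w.IsCycle ∧ e ∈ w.edges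

/-- `G` has a semi-disjoint cycle: a cycle containing at most one vertex whose degree
in `G` is strictly larger than `2`. -/
def HasSemiDisjointCycle [Fintype V] (G : SimpleGraph V) : Prop :=
  ∃ (u : V) (w : G.Walk u u), w.IsCycle ∧
    (w.support.toFinset.filter fun v => 2 < G.degree v).card ≤ 1

/-- The set `δ(F, V - F)` of edges of `G` with exactly one endpoint in `F`. -/
def cutEdges [Fintype V] (G : SimpleGraph V) (F : Finset V) : Finset (Sym2 V) :=
  G.edgeFinset.filter fun e => ∃ u v, e = s(u, v) ∧ u ∈ F ∧ v ∉ F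

/-- The function `f_x(S) = |E[S]| - |S| - Σ_{u ∈ S} (d_S(u) - 1) x_u`. -/
def fWD [Fintype V] (G : SimpleGraph V) (x : V → ℝ) (S : Finset V) : ℝ :=
  (edgesIn G S : ℝ) - S.card - ∑ u ∈ S, ((degIn G S u : ℝ) - 1) * x u

/-- The row vector `row(S)` of the weak density constraint for the set `S`:
its coordinate at `u` is `d_S(u) - 1` if `u ∈ S` and `0` otherwise. -/
def rowWD [Fintype V] (G : SimpleGraph V) (S : Finset V) (u : V) : ℝ :=
  if u ∈ S then (degIn G S u : ℝ) - 1 else 0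

/-- The constraints (orientation), (load), (cumulative) and nonnegativity of the
purely orientation-based ILP formulation for FVS, with one copy `y f` of the
orientation variables for each edge `f` of `G`:
* `x_v + x_w + y^f_{e,v} + y^f_{e,w} ≥ 1` for all edges `e = vw` and all `f ∈ E`;
* `x_v + Σ_{e = vw ∈ E} y^f_{e,w} ≥ 1` for all `v ∈ V` and all `f ∈ E`;
* `Σ_{v ∈ V - {a,b}} x_v + Σ_{e = vw ∈ E - {f}} (y^f_{e,w} + y^f_{e,v}) ≤ |V| - 2`
  for all `f = ab ∈ E`; and all variables nonnegative. -/
def OrientSD [Fintype V] (G : SimpleGraph V) (x : V → ℝ)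
    (y : Sym2 V → Sym2 V → V → ℝ) : Prop :=
  (∀ f ∈ G.edgeSet, ∀ v w, G.Adj v w →
    1 ≤ x v + x w + y f s(v, w) v + y f s(v, w) w) ∧
  (∀ f ∈ G.edgeSet, ∀ v : V, 1 ≤ x v + ∑ w ∈ G.neighborFinset v, y f s(v, w) w) ∧
  (∀ a b : V, G.Adj a b →
    (∑ v ∈ Finset.univ \ {a, b}, x v) +
      (∑ e ∈ G.edgeFinset.erase s(a, b),
        ∑ u ∈ Finset.univ.filter (fun u => u ∈ e), y s(a, b) e u)
      ≤ (Fintype.card V : ℝ) - 2) ∧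
  (∀ u, 0 ≤ x u) ∧ (∀ f e u, 0 ≤ y f e u)

end
end FVS
namespace FVS

noncomputable section Proof12

open Finset

variable {V : Type*} [Fintype V] (G : SimpleGraph V) (x : V → ℝ)

/-- the function `f(S)` whose nonpositivity is the weak density constraint. -/
def fp (S : Finset V) : ℝ :=
  (edgesIn G S : ℝ) - S.card - ∑ u ∈ S, ((degIn G S u : ℝ) - 1) * x u

/-- min degree 2 condition. -/
def mind2 (S : Finset V) : Prop := ∀ u ∈ S, 2 ≤ degIn G S u

lemma degIn_mono {S T : Finset V} (h : S ⊆ T) (u : V) : degIn G S u ≤ degIn G T u :=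
  Finset.card_le_card (Finset.filter_subset_filter _ h)

lemma degIn_union_inter (S T : Finset V) (u : V) :
    degIn G (S ∪ T) u + degIn G (S ∩ T) u = degIn G S u + degIn G T u := by
  classical
  unfold degIn
  rw [Finset.filter_union, Finset.filter_inter_distrib]
  exact Finset.card_union_add_card_inter _ _

lemma degIn_erase_ne {S : Finset V} {v u : V} (huv : u ≠ v) :
    degIn G (S.erase v) u + (if G.Adj u v ∧ v ∈ S then 1 else 0) = degIn G S u := by
  classical
  unfold degIn
  by_cases h : G.Adj u v ∧ v ∈ S
  · rw [if_pos h]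
    have hins : (S.filter fun w => G.Adj u w) =
        insert v ((S.erase v).filter fun w => G.Adj u w) := by
      ext w
      simp only [Finset.mem_filter, Finset.mem_insert, Finset.mem_erase]
      constructor
      · rintro ⟨hw, ha⟩
        by_cases hwv : w = v
        · exact Or.inl hwv
        · exact Or.inr ⟨⟨hwv, hw⟩, ha⟩
      · rintro (rfl | ⟨⟨-, hw⟩, ha⟩)
        · exact ⟨h.2, h.1⟩
        · exact ⟨hw, ha⟩
    rw [hins, Finset.card_insert_of_notMem (by simp)]
  · rw [if_neg h, add_zero]
    congr 1
    ext w
    simp only [Finset.mem_filter, Finset.mem_erase]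
    constructor
    · rintro ⟨⟨-, hw⟩, ha⟩; exact ⟨hw, ha⟩
    · rintro ⟨hw, ha⟩
      refine ⟨⟨?_, hw⟩, ha⟩
      rintro rfl
      exact h ⟨ha, hw⟩

/-- edges of `G` inside `S`. -/
def ES (S : Finset V) : Finset (Sym2 V) := G.edgeFinset.filter fun e => ∀ v ∈ e, v ∈ S

lemma edgesIn_eq_card_ES (S : Finset V) : edgesIn G S = (ES G S).card := rfl

lemma mem_ES_mk {S : Finset V} {a b : V} :
    s(a, b) ∈ ES G S ↔ G.Adj a b ∧ a ∈ S ∧ b ∈ S := by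
  simp only [ES, Finset.mem_filter, SimpleGraph.mem_edgeFinset, SimpleGraph.mem_edgeSet,
    Sym2.mem_iff]
  constructor
  · rintro ⟨ha, h⟩
    exact ⟨ha, h a (Or.inl rfl), h b (Or.inr rfl)⟩
  · rintro ⟨ha, h1, h2⟩
    refine ⟨ha, ?_⟩
    rintro w (rfl | rfl) <;> assumption

lemma edgesIn_empty : edgesIn G (∅ : Finset V) = 0 := by
  unfold edgesIn
  rw [Finset.card_eq_zero]
  ext e
  induction e with
  | h a b =>
    simp only [Finset.mem_filter, Finset.notMem_empty, Sym2.mem_iff, iff_false, not_and]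
    intro _ h
    exact (h a (Or.inl rfl))

lemma ES_erase {S : Finset V} {v : V} (hv : v ∈ S) :
    ES G (S.erase v) = (ES G S).filter fun e => v ∉ e := by
  ext e
  induction e with
  | h a b =>
    rw [Finset.mem_filter, mem_ES_mk, mem_ES_mk, Finset.mem_erase, Finset.mem_erase,
      Sym2.mem_iff]
    constructor
    · rintro ⟨ha, ⟨h1, h2⟩, h3, h4⟩
      exact ⟨⟨ha, h2, h4⟩, by rintro (rfl | rfl) <;> simp_all⟩
    · rintro ⟨⟨ha, h1, h2⟩, h3⟩
      push_neg at h3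
      exact ⟨ha, ⟨Ne.symm h3.1, h1⟩, Ne.symm h3.2, h2⟩

/-- the edges of `E[S]` through `v ∈ S` are in bijection with the neighbours of `v` in `S`. -/
lemma card_ES_through {S : Finset V} {v : V} (hv : v ∈ S) :
    ((ES G S).filter fun e => v ∈ e).card = degIn G S v := by
  classical
  unfold degIn
  rw [eq_comm]
  apply Finset.card_bij (fun w _ => s(v, w))
  · intro w hw
    rw [Finset.mem_filter] at hw
    rw [Finset.mem_filter, mem_ES_mk]
    exact ⟨⟨hw.2, hv, hw.1⟩, Sym2.mem_mk_left v w⟩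
  · intro w1 h1 w2 h2 he
    rw [Finset.mem_filter] at h1 h2
    rw [Sym2.eq_iff] at he
    rcases he with ⟨-, rfl⟩ | ⟨rfl, rfl⟩
    · rfl
    · exact (G.irrefl h2.2).elim
  · intro e he
    rw [Finset.mem_filter] at he
    obtain ⟨hes, hve⟩ := he
    have hother := Sym2.other_spec hve
    have hmem : s(v, Sym2.Mem.other hve) ∈ ES G S := by rw [hother]; exact hes
    rw [mem_ES_mk] at hmem
    exact ⟨Sym2.Mem.other hve, Finset.mem_filter.mpr ⟨hmem.2.2, hmem.1⟩, hother⟩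

lemma edgesIn_erase {S : Finset V} {v : V} (hv : v ∈ S) :
    edgesIn G S = edgesIn G (S.erase v) + degIn G S v := by
  rw [edgesIn_eq_card_ES, edgesIn_eq_card_ES, ES_erase G hv, ← card_ES_through G hv]
  rw [add_comm]
  exact (Finset.card_filter_add_card_filter_not (fun e => v ∈ e)).symm

end Proof12

end FVS
namespace FVS
noncomputable section Proof12
open Finset
variable {V : Type*} [Fintype V] (G : SimpleGraph V) (x : V → ℝ)

lemma filter_adj_erase (S : Finset V) (v : V) :
    (S.erase v).filter (fun u => G.Adj v u) = S.filter (fun u => G.Adj v u) := by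
  ext u
  simp only [Finset.mem_filter, Finset.mem_erase]
  constructor
  · rintro ⟨⟨-, h⟩, ha⟩; exact ⟨h, ha⟩
  · rintro ⟨h, ha⟩
    refine ⟨⟨?_, h⟩, ha⟩
    rintro rfl
    exact G.irrefl ha

lemma degIn_filter (S : Finset V) (v : V) :
    degIn G S v = (S.filter (fun u => G.Adj v u)).card := rfl

lemma fp_erase {S : Finset V} {v : V} (hv : v ∈ S) :
    fp G x (S.erase v) = fp G x S - degIn G S v + 1 + ((degIn G S v : ℝ) - 1) * x v
      + ∑ u ∈ S.filter (fun u => G.Adj v u), x u := by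
  classical
  unfold fp
  rw [edgesIn_erase G hv, Finset.card_erase_of_mem hv]
  have hcard : (1 : ℕ) ≤ S.card := Finset.one_le_card.mpr ⟨v, hv⟩
  have hsum : ∑ u ∈ S.erase v, ((degIn G (S.erase v) u : ℝ) - 1) * x u
      = (∑ u ∈ S.erase v, ((degIn G S u : ℝ) - 1) * x u)
        - ∑ u ∈ S.filter (fun u => G.Adj v u), x u := by
    rw [← filter_adj_erase G S v, Finset.sum_filter, ← Finset.sum_sub_distrib]
    apply Finset.sum_congr rfl
    intro u hu
    have hne : u ≠ v := Finset.ne_of_mem_erase hu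
    have hdeg := degIn_erase_ne G (S := S) hne
    by_cases hadj : G.Adj v u
    · rw [if_pos ⟨(G.adj_comm v u).mp hadj, hv⟩] at hdeg
      rw [if_pos hadj]
      have hc : (degIn G (S.erase v) u : ℝ) = (degIn G S u : ℝ) - 1 := by
        have := congrArg (Nat.cast : ℕ → ℝ) hdeg
        push_cast at this
        linarith
      rw [hc]; ring
    · rw [if_neg (by rw [G.adj_comm]; tauto)] at hdeg
      rw [if_neg hadj, add_zero] at *
      rw [hdeg]; ring
  rw [hsum, Finset.sum_erase_eq_sub hv]
  have : ((S.card - 1 : ℕ) : ℝ) = (S.card : ℝ) - 1 := by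
    push_cast [hcard]; ring
  rw [this]
  push_cast
  ring

lemma no_isolated (feas : ∀ S, fp G x S ≤ 0) {S : Finset V} {v : V}
    (ht : fp G x S = 0) (hv : v ∈ S) (hd : degIn G S v = 0) (hx1 : x v < 1) : False := by
  have hfilter : S.filter (fun u => G.Adj v u) = ∅ := by
    rw [← Finset.card_eq_zero, ← degIn_filter]; exact hd
  have := fp_erase G x hv
  rw [ht, hd, hfilter] at this
  simp at this
  have h2 := feas (S.erase v)
  rw [this] at h2
  linarith

lemma prune_deg1 (feas : ∀ S, fp G x S ≤ 0) (hnn : ∀ u, 0 ≤ x u) {S : Finset V} {v : V}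
    (ht : fp G x S = 0) (hv : v ∈ S) (hd : degIn G S v = 1) :
    fp G x (S.erase v) = 0 ∧ (∀ u, 0 < x u → rowWD G S u = rowWD G (S.erase v) u) := by
  obtain ⟨w, hw⟩ := Finset.card_eq_one.mp (by rw [← degIn_filter G S v]; exact hd)
  have hwS : w ∈ S.filter (fun u => G.Adj v u) := by rw [hw]; exact Finset.mem_singleton_self w
  rw [Finset.mem_filter] at hwS
  have hfe := fp_erase G x hv
  rw [ht, hd, hw, Finset.sum_singleton] at hfe
  simp only [Nat.cast_one] at hfe
  have hfe' : fp G x (S.erase v) = x w := by rw [hfe]; ring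
  have hxw : x w = 0 := le_antisymm (by rw [← hfe']; exact feas _) (hnn w)
  refine ⟨by rw [hfe', hxw], ?_⟩
  intro u hu
  have huw : u ≠ w := by rintro rfl; rw [hxw] at hu; exact lt_irrefl _ hu
  unfold rowWD
  by_cases huS : u ∈ S
  · by_cases huv : u = v
    · subst huv
      rw [if_pos huS, if_neg (Finset.notMem_erase u S), hd]
      norm_num
    · have huS' : u ∈ S.erase v := Finset.mem_erase.mpr ⟨huv, huS⟩
      rw [if_pos huS, if_pos huS']
      have hnadj : ¬ G.Adj v u := by
        intro hadj
        exact huw (Finset.mem_singleton.mp (by rw [← hw, Finset.mem_filter]; exact ⟨huS, hadj⟩))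
      have hdeg := degIn_erase_ne G (S := S) (u := u) huv
      rw [if_neg (by rw [G.adj_comm]; tauto), add_zero] at hdeg
      rw [hdeg]
  · rw [if_neg huS, if_neg (fun hc => huS (Finset.mem_of_mem_erase hc))]

end Proof12
end FVS
namespace FVS
noncomputable section Proof12
open Finset
variable {V : Type*} [Fintype V] (G : SimpleGraph V) (x : V → ℝ)

/-- ordered cross pairs between `S \ T` and `T \ S`. -/
def crossP (S T : Finset V) : Finset (V × V) :=
  ((S \ T) ×ˢ (T \ S)).filter fun p => G.Adj p.1 p.2

lemma ES_inter (S T : Finset V) : ES G (S ∩ T) = ES G S ∩ ES G T := by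
  ext e
  simp only [ES, Finset.mem_filter, Finset.mem_inter]
  constructor
  · rintro ⟨he, h⟩
    exact ⟨⟨he, fun v hv => (h v hv).1⟩, ⟨he, fun v hv => (h v hv).2⟩⟩
  · rintro ⟨⟨he, h1⟩, ⟨-, h2⟩⟩
    exact ⟨he, fun v hv => ⟨h1 v hv, h2 v hv⟩⟩

/-- cross edges (as `Sym2`). -/
def crossE (S T : Finset V) : Finset (Sym2 V) :=
  (ES G (S ∪ T)).filter fun e => (∃ a ∈ e, a ∈ S \ T) ∧ (∃ b ∈ e, b ∈ T \ S)

lemma ES_union_decomp (S T : Finset V) :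
    ES G (S ∪ T) = (ES G S ∪ ES G T) ∪ crossE G S T := by
  ext e
  induction e with
  | h a b =>
    simp only [crossE, Finset.mem_union, Finset.mem_filter, mem_ES_mk, Finset.mem_sdiff,
      Sym2.mem_iff, Finset.mem_union]
    by_cases haS : a ∈ S <;> by_cases haT : a ∈ T <;> by_cases hbS : b ∈ S <;>
      by_cases hbT : b ∈ T <;> by_cases hadj : G.Adj a b <;>
      simp_all <;> tauto

lemma crossE_disj (S T : Finset V) : Disjoint (ES G S ∪ ES G T) (crossE G S T) := by
  rw [Finset.disjoint_left]
  intro e he hce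
  simp only [crossE, Finset.mem_filter] at hce
  obtain ⟨-, ⟨a, ha, haS⟩, ⟨b, hb, hbT⟩⟩ := hce
  rw [Finset.mem_sdiff] at haS hbT
  rw [Finset.mem_union] at he
  rcases he with he | he <;> simp only [ES, Finset.mem_filter] at he
  · exact hbT.2 (he.2 b hb)
  · exact haS.2 (he.2 a ha)

lemma card_crossE (S T : Finset V) : (crossE G S T).card = (crossP G S T).card := by
  classical
  rw [eq_comm]
  apply Finset.card_bij (fun p _ => s(p.1, p.2))
  · rintro ⟨a, b⟩ hp
    simp only [crossP, Finset.mem_filter, Finset.mem_product] at hp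
    obtain ⟨⟨haS, hbT⟩, hadj⟩ := hp
    rw [Finset.mem_sdiff] at haS hbT
    simp only [crossE, Finset.mem_filter, mem_ES_mk]
    refine ⟨⟨hadj, Finset.mem_union_left _ haS.1, Finset.mem_union_right _ hbT.1⟩, ?_, ?_⟩
    · exact ⟨a, Sym2.mem_mk_left a b, Finset.mem_sdiff.mpr haS⟩
    · exact ⟨b, Sym2.mem_mk_right a b, Finset.mem_sdiff.mpr hbT⟩
  · rintro ⟨a, b⟩ hp ⟨a', b'⟩ hp' he
    simp only [crossP, Finset.mem_filter, Finset.mem_product, Finset.mem_sdiff] at hp hp'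
    rw [Sym2.eq_iff] at he
    rcases he with ⟨rfl, rfl⟩ | ⟨rfl, rfl⟩
    · rfl
    · exact (hp'.1.2.2 hp.1.1.1).elim
  · intro e he
    induction e with
    | h a b =>
      simp only [crossE, Finset.mem_filter, mem_ES_mk, Sym2.mem_iff] at he
      obtain ⟨⟨hadj, -, -⟩, ⟨c, hc, hcS⟩, ⟨d, hd, hdT⟩⟩ := he
      rw [Finset.mem_sdiff] at hcS hdT
      rcases hc with rfl | rfl
      · rcases hd with rfl | rfl
        · exact (hcS.2 hdT.1).elim
        · refine ⟨(c, d), ?_, rfl⟩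
          simp only [crossP, Finset.mem_filter, Finset.mem_product, Finset.mem_sdiff]
          exact ⟨⟨hcS, hdT⟩, hadj⟩
      · rcases hd with rfl | rfl
        · refine ⟨(c, d), ?_, Sym2.eq_swap⟩
          simp only [crossP, Finset.mem_filter, Finset.mem_product, Finset.mem_sdiff]
          exact ⟨⟨hcS, hdT⟩, hadj.symm⟩
        · exact (hcS.2 hdT.1).elim

end Proof12
end FVS
namespace FVS
noncomputable section Proof12
open Finset
variable {V : Type*} [Fintype V] (G : SimpleGraph V) (x : V → ℝ)

lemma edgesIn_union (S T : Finset V) :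
    edgesIn G (S ∪ T) + edgesIn G (S ∩ T)
      = edgesIn G S + edgesIn G T + (crossP G S T).card := by
  have h1 : edgesIn G (S ∪ T) = (ES G S ∪ ES G T).card + (crossE G S T).card := by
    rw [edgesIn_eq_card_ES, ES_union_decomp, Finset.card_union_of_disjoint (crossE_disj G S T)]
  have h2 : (ES G S ∪ ES G T).card + (ES G S ∩ ES G T).card
      = (ES G S).card + (ES G T).card := Finset.card_union_add_card_inter _ _
  have h3 : edgesIn G (S ∩ T) = (ES G S ∩ ES G T).card := by
    rw [edgesIn_eq_card_ES, ES_inter]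
  rw [h1, h3, card_crossE]
  simp only [edgesIn_eq_card_ES]
  omega

/-- double-sum version of the weighted degree sum. -/
def Qd (A : Finset V) : ℝ :=
  ∑ u, ∑ v, if u ∈ A ∧ v ∈ A ∧ G.Adj u v then x u else 0

lemma sum_deg_eq_Qd (A : Finset V) :
    ∑ u ∈ A, (degIn G A u : ℝ) * x u = Qd G x A := by
  classical
  unfold Qd
  have h1 : ∀ u, (∑ v, if u ∈ A ∧ v ∈ A ∧ G.Adj u v then x u else 0)
      = if u ∈ A then (degIn G A u : ℝ) * x u else 0 := by
    intro u
    by_cases hu : u ∈ A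
    · rw [if_pos hu]
      have h2 : ∀ v, (if u ∈ A ∧ v ∈ A ∧ G.Adj u v then x u else 0)
          = if v ∈ A.filter (fun w => G.Adj u w) then x u else 0 := by
        intro v
        by_cases hv : v ∈ A ∧ G.Adj u v
        · rw [if_pos ⟨hu, hv⟩, if_pos (Finset.mem_filter.mpr ⟨hv.1, hv.2⟩)]
        · rw [if_neg (by tauto), if_neg (by rw [Finset.mem_filter]; tauto)]
      rw [Finset.sum_congr rfl (fun v _ => h2 v)]
      rw [Finset.sum_ite_mem, Finset.univ_inter, Finset.sum_const, degIn]
      simp [mul_comm]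
    · rw [if_neg hu]
      apply Finset.sum_eq_zero
      intro v _
      rw [if_neg (by tauto)]
  rw [Finset.sum_congr rfl (fun u _ => h1 u), Finset.sum_ite_mem, Finset.univ_inter]

lemma Qd_uncross (S T : Finset V) :
    Qd G x (S ∪ T) + Qd G x (S ∩ T) = Qd G x S + Qd G x T
      + ∑ p ∈ crossP G S T, (x p.1 + x p.2) := by
  classical
  have key : ∀ u v : V,
      (if u ∈ S ∪ T ∧ v ∈ S ∪ T ∧ G.Adj u v then x u else 0)
      + (if u ∈ S ∩ T ∧ v ∈ S ∩ T ∧ G.Adj u v then x u else 0)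
      = (if u ∈ S ∧ v ∈ S ∧ G.Adj u v then x u else 0)
      + (if u ∈ T ∧ v ∈ T ∧ G.Adj u v then x u else 0)
      + (if u ∈ S \ T ∧ v ∈ T \ S ∧ G.Adj u v then x u else 0)
      + (if u ∈ T \ S ∧ v ∈ S \ T ∧ G.Adj u v then x u else 0) := by
    intro u v
    by_cases h1 : u ∈ S <;> by_cases h2 : u ∈ T <;> by_cases h3 : v ∈ S <;>
      by_cases h4 : v ∈ T <;> by_cases h5 : G.Adj u v <;>
      simp_all [Finset.mem_union, Finset.mem_inter, Finset.mem_sdiff]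
  have collapse : ∀ (A B : Finset V) (g : V → V → ℝ),
      (∑ u, ∑ v, if u ∈ A ∧ v ∈ B ∧ G.Adj u v then g u v else 0)
      = ∑ u ∈ A, ∑ v ∈ B, if G.Adj u v then g u v else 0 := by
    intro A B g
    have h1 : ∀ u, (∑ v, if u ∈ A ∧ v ∈ B ∧ G.Adj u v then g u v else 0)
        = if u ∈ A then ∑ v, (if v ∈ B ∧ G.Adj u v then g u v else 0) else 0 := by
      intro u
      by_cases hu : u ∈ A
      · rw [if_pos hu]
        apply Finset.sum_congr rfl
        intro v _
        by_cases h : v ∈ B ∧ G.Adj u v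
        · rw [if_pos ⟨hu, h⟩, if_pos h]
        · rw [if_neg (by tauto), if_neg h]
      · rw [if_neg hu]
        apply Finset.sum_eq_zero
        intro v _
        rw [if_neg (by tauto)]
    rw [Finset.sum_congr rfl fun u _ => h1 u, Finset.sum_ite_mem, Finset.univ_inter]
    apply Finset.sum_congr rfl
    intro u _
    have h2 : ∀ v, (if v ∈ B ∧ G.Adj u v then g u v else 0)
        = if v ∈ B then (if G.Adj u v then g u v else 0) else 0 := by
      intro v
      by_cases hv : v ∈ B <;> by_cases ha : G.Adj u v <;> simp_all
    rw [Finset.sum_congr rfl fun v _ => h2 v, Finset.sum_ite_mem, Finset.univ_inter]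
  have hsum : Qd G x (S ∪ T) + Qd G x (S ∩ T) = Qd G x S + Qd G x T
      + (∑ u, ∑ v, if u ∈ S \ T ∧ v ∈ T \ S ∧ G.Adj u v then x u else 0)
      + (∑ u, ∑ v, if u ∈ T \ S ∧ v ∈ S \ T ∧ G.Adj u v then x u else 0) := by
    unfold Qd
    rw [← Finset.sum_add_distrib, ← Finset.sum_add_distrib, ← Finset.sum_add_distrib,
      ← Finset.sum_add_distrib]
    apply Finset.sum_congr rfl
    intro u _
    rw [← Finset.sum_add_distrib, ← Finset.sum_add_distrib, ← Finset.sum_add_distrib,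
      ← Finset.sum_add_distrib]
    exact Finset.sum_congr rfl fun v _ => key u v
  have hcross : ∀ g : V × V → ℝ, (∑ p ∈ crossP G S T, g p)
      = ∑ u ∈ S \ T, ∑ v ∈ T \ S, if G.Adj u v then g (u, v) else 0 := by
    intro g
    rw [crossP, Finset.sum_filter, Finset.sum_product]
  have hR1 : (∑ u, ∑ v, if u ∈ S \ T ∧ v ∈ T \ S ∧ G.Adj u v then x u else 0)
      = ∑ p ∈ crossP G S T, x p.1 := by
    rw [collapse, hcross fun p => x p.1]
  have hR2 : (∑ u, ∑ v, if u ∈ T \ S ∧ v ∈ S \ T ∧ G.Adj u v then x u else 0)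
      = ∑ p ∈ crossP G S T, x p.2 := by
    rw [collapse, hcross fun p => x p.2]
    rw [Finset.sum_comm]
    apply Finset.sum_congr rfl
    intro u _
    apply Finset.sum_congr rfl
    intro v _
    by_cases h : G.Adj u v
    · rw [if_pos h, if_pos h.symm]
    · rw [if_neg h, if_neg (fun hc => h hc.symm)]
  rw [hsum, hR1, hR2, Finset.sum_add_distrib]
  ring

lemma fp_uncross (S T : Finset V) :
    fp G x (S ∪ T) + fp G x (S ∩ T) = fp G x S + fp G x T
      + ∑ p ∈ crossP G S T, (1 - x p.1 - x p.2) := by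
  classical
  have hE : ((edgesIn G (S ∪ T) : ℝ)) + (edgesIn G (S ∩ T) : ℝ)
      = (edgesIn G S : ℝ) + (edgesIn G T : ℝ) + ((crossP G S T).card : ℝ) := by
    exact_mod_cast congrArg (Nat.cast : ℕ → ℝ) (edgesIn_union G S T)
  have hC : (((S ∪ T).card : ℝ)) + ((S ∩ T).card : ℝ) = (S.card : ℝ) + (T.card : ℝ) := by
    exact_mod_cast congrArg (Nat.cast : ℕ → ℝ) (Finset.card_union_add_card_inter S T)
  have hL : (∑ u ∈ S ∪ T, x u) + (∑ u ∈ S ∩ T, x u) = (∑ u ∈ S, x u) + ∑ u ∈ T, x u :=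
    Finset.sum_union_inter
  have hQ := Qd_uncross G x S T
  have hsplit : ∀ A : Finset V, (∑ u ∈ A, ((degIn G A u : ℝ) - 1) * x u)
      = (∑ u ∈ A, (degIn G A u : ℝ) * x u) - ∑ u ∈ A, x u := by
    intro A
    rw [← Finset.sum_sub_distrib]
    exact Finset.sum_congr rfl fun u _ => by ring
  have hX : (∑ p ∈ crossP G S T, (1 - x p.1 - x p.2))
      = ((crossP G S T).card : ℝ) - ∑ p ∈ crossP G S T, (x p.1 + x p.2) := by
    have : (∑ p ∈ crossP G S T, (1 - x p.1 - x p.2))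
        = ∑ p ∈ crossP G S T, ((1:ℝ) - (x p.1 + x p.2)) :=
      Finset.sum_congr rfl fun p _ => by ring
    rw [this, Finset.sum_sub_distrib, Finset.sum_const]
    simp [nsmul_eq_mul, mul_comm]
  unfold fp
  rw [hsplit, hsplit, hsplit, hsplit, sum_deg_eq_Qd, sum_deg_eq_Qd, sum_deg_eq_Qd,
    sum_deg_eq_Qd]
  rw [hX]
  linarith [hE, hC, hL, hQ]

lemma tight_uncross (feas : ∀ S, fp G x S ≤ 0) (h13 : ∀ u, x u < 1/3)
    {S T : Finset V} (hS : fp G x S = 0) (hT : fp G x T = 0) :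
    fp G x (S ∪ T) = 0 ∧ fp G x (S ∩ T) = 0 ∧ crossP G S T = ∅ := by
  have hun := fp_uncross G x S T
  rw [hS, hT] at hun
  have hterm : ∀ p ∈ crossP G S T, (1:ℝ)/3 ≤ 1 - x p.1 - x p.2 := by
    intro p _
    have := h13 p.1
    have := h13 p.2
    linarith
  have hge : ((crossP G S T).card : ℝ) * (1/3) ≤ ∑ p ∈ crossP G S T, (1 - x p.1 - x p.2) := by
    have := Finset.card_nsmul_le_sum (crossP G S T) (fun p => 1 - x p.1 - x p.2) (1/3) hterm
    simpa [nsmul_eq_mul] using this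
  have h1 := feas (S ∪ T)
  have h2 := feas (S ∩ T)
  have hcards : (0:ℝ) ≤ ((crossP G S T).card : ℝ) := Nat.cast_nonneg _
  have hczero : ((crossP G S T).card : ℝ) = 0 := by nlinarith
  have hcempty : crossP G S T = ∅ := by
    rw [← Finset.card_eq_zero]
    exact_mod_cast hczero
  rw [hcempty] at hun
  simp at hun
  exact ⟨by linarith, by linarith, hcempty⟩

end Proof12
end FVS
namespace FVS
noncomputable section Proof12
open Finset
variable {V : Type*} [Fintype V] (G : SimpleGraph V) (x : V → ℝ)

lemma row_additive {S T : Finset V} (hc : crossP G S T = ∅) (u : V) :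
    rowWD G S u + rowWD G T u = rowWD G (S ∪ T) u + rowWD G (S ∩ T) u := by
  classical
  have hnc : ∀ a b, G.Adj a b → a ∈ S → a ∉ T → b ∈ T → b ∈ S := by
    intro a b hadj haS haT hbT
    by_contra hbS
    have : (a, b) ∈ crossP G S T := by
      simp only [crossP, Finset.mem_filter, Finset.mem_product, Finset.mem_sdiff]
      exact ⟨⟨⟨haS, haT⟩, hbT, hbS⟩, hadj⟩
    rw [hc] at this
    exact absurd this (Finset.notMem_empty _)
  have hnc' : ∀ a b, G.Adj a b → a ∈ T → a ∉ S → b ∈ S → b ∈ T := by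
    intro a b hadj haT haS hbS
    by_contra hbT
    have : (b, a) ∈ crossP G S T := by
      simp only [crossP, Finset.mem_filter, Finset.mem_product, Finset.mem_sdiff]
      exact ⟨⟨⟨hbS, hbT⟩, haT, haS⟩, hadj.symm⟩
    rw [hc] at this
    exact absurd this (Finset.notMem_empty _)
  unfold rowWD
  by_cases huS : u ∈ S <;> by_cases huT : u ∈ T
  · rw [if_pos huS, if_pos huT, if_pos (Finset.mem_union_left _ huS),
      if_pos (Finset.mem_inter.mpr ⟨huS, huT⟩)]
    have := degIn_union_inter G S T u
    have hcast := congrArg (Nat.cast : ℕ → ℝ) this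
    push_cast at hcast
    linarith
  · rw [if_pos huS, if_neg huT, if_pos (Finset.mem_union_left _ huS),
      if_neg (fun hc' => huT (Finset.mem_inter.mp hc').2)]
    have hdeg : degIn G (S ∪ T) u = degIn G S u := by
      unfold degIn
      congr 1
      ext w
      simp only [Finset.mem_filter, Finset.mem_union]
      constructor
      · rintro ⟨hw | hw, ha⟩
        · exact ⟨hw, ha⟩
        · by_cases hwS : w ∈ S
          · exact ⟨hwS, ha⟩
          · exact ⟨hnc u w ha huS huT hw, ha⟩
      · rintro ⟨hw, ha⟩
        exact ⟨Or.inl hw, ha⟩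
    rw [hdeg]
  · rw [if_neg huS, if_pos huT, if_pos (Finset.mem_union_right _ huT),
      if_neg (fun hc' => huS (Finset.mem_inter.mp hc').1)]
    have hdeg : degIn G (S ∪ T) u = degIn G T u := by
      unfold degIn
      congr 1
      ext w
      simp only [Finset.mem_filter, Finset.mem_union]
      constructor
      · rintro ⟨hw | hw, ha⟩
        · by_cases hwT : w ∈ T
          · exact ⟨hwT, ha⟩
          · exact ⟨hnc' u w ha huT huS hw, ha⟩
        · exact ⟨hw, ha⟩
      · rintro ⟨hw, ha⟩
        exact ⟨Or.inr hw, ha⟩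
    rw [hdeg]
    ring
  · rw [if_neg huS, if_neg huT, if_neg (by rw [Finset.mem_union]; tauto),
      if_neg (fun hc' => huS (Finset.mem_inter.mp hc').1)]

/-- the 2-core of `S`: union of all subsets of min degree at least 2. -/
def coreS (S : Finset V) : Finset V := (S.powerset.filter (mind2 G)).sup id

lemma coreS_subset (S : Finset V) : coreS G S ⊆ S := by
  intro a ha
  simp only [coreS, Finset.mem_sup, id] at ha
  obtain ⟨A, hA, haA⟩ := ha
  rw [Finset.mem_filter, Finset.mem_powerset] at hA
  exact hA.1 haA

lemma subset_coreS {S A : Finset V} (hA : A ⊆ S) (h2 : mind2 G A) : A ⊆ coreS G S := by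
  intro a ha
  simp only [coreS, Finset.mem_sup, id]
  exact ⟨A, Finset.mem_filter.mpr ⟨Finset.mem_powerset.mpr hA, h2⟩, ha⟩

lemma mind2_coreS (S : Finset V) : mind2 G (coreS G S) := by
  intro u hu
  simp only [coreS, Finset.mem_sup, id] at hu
  obtain ⟨A, hA, huA⟩ := hu
  rw [Finset.mem_filter, Finset.mem_powerset] at hA
  calc 2 ≤ degIn G A u := hA.2 u huA
    _ ≤ degIn G (coreS G S) u :=
        degIn_mono G (subset_coreS G hA.1 hA.2) u

lemma mind2_union {S T : Finset V} (hS : mind2 G S) (hT : mind2 G T) : mind2 G (S ∪ T) := by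
  intro u hu
  rcases Finset.mem_union.mp hu with h | h
  · exact le_trans (hS u h) (degIn_mono G Finset.subset_union_left u)
  · exact le_trans (hT u h) (degIn_mono G Finset.subset_union_right u)

/-- pruning a tight set to its 2-core keeps it tight and does not change the row
on coordinates where `x` is positive. -/
lemma coreS_tight (feas : ∀ S, fp G x S ≤ 0) (hnn : ∀ u, 0 ≤ x u) (h13 : ∀ u, x u < 1/3) :
    ∀ (S : Finset V), fp G x S = 0 →
      fp G x (coreS G S) = 0 ∧ ∀ u, 0 < x u → rowWD G S u = rowWD G (coreS G S) u := by
  intro S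
  induction S using Finset.strongInduction with
  | H S ih =>
    intro ht
    by_cases h2 : mind2 G S
    · have : coreS G S = S :=
        Finset.Subset.antisymm (coreS_subset G S) (subset_coreS G (Finset.Subset.refl S) h2)
      rw [this]
      exact ⟨ht, fun u _ => rfl⟩
    · unfold mind2 at h2
      push_neg at h2
      obtain ⟨v, hv, hdv⟩ := h2
      have : degIn G S v = 0 ∨ degIn G S v = 1 := by omega
      rcases this with h0 | h1
      · exact (no_isolated G x feas ht hv h0 (by linarith [h13 v])).elim
      · obtain ⟨hft, hrow⟩ := prune_deg1 G x feas hnn ht hv h1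
        have hAv : ∀ A : Finset V, A ⊆ S → mind2 G A → A ⊆ S.erase v := by
          intro A hAS h2A b hb
          rw [Finset.mem_erase]
          refine ⟨?_, hAS hb⟩
          rintro rfl
          have := h2A b hb
          have := degIn_mono G hAS b
          omega
        have hcore_eq : coreS G (S.erase v) = coreS G S := by
          apply Finset.Subset.antisymm
          · intro a ha
            simp only [coreS, Finset.mem_sup, id] at ha ⊢
            obtain ⟨A, hA, haA⟩ := ha
            rw [Finset.mem_filter, Finset.mem_powerset] at hA
            exact ⟨A, Finset.mem_filter.mpr ⟨Finset.mem_powerset.mpr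
              (hA.1.trans (Finset.erase_subset v S)), hA.2⟩, haA⟩
          · intro a ha
            simp only [coreS, Finset.mem_sup, id] at ha ⊢
            obtain ⟨A, hA, haA⟩ := ha
            rw [Finset.mem_filter, Finset.mem_powerset] at hA
            exact ⟨A, Finset.mem_filter.mpr ⟨Finset.mem_powerset.mpr
              (hAv A hA.1 hA.2), hA.2⟩, haA⟩
        have hSe := ih (S.erase v) (Finset.erase_ssubset hv) hft
        refine ⟨by rw [← hcore_eq]; exact hSe.1, fun u hu => ?_⟩
        rw [hrow u hu, hSe.2 u hu, hcore_eq]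

end Proof12
end FVS
namespace FVS
noncomputable section Proof12
open Finset
variable {V : Type*} [Fintype V] (G : SimpleGraph V) (x : V → ℝ)

lemma degIn_self_erase (S : Finset V) (w : V) : degIn G (S.erase w) w = degIn G S w := by
  unfold degIn
  congr 1
  ext v
  simp only [Finset.mem_filter, Finset.mem_erase]
  constructor
  · rintro ⟨⟨-, hv⟩, ha⟩; exact ⟨hv, ha⟩
  · rintro ⟨hv, ha⟩
    exact ⟨⟨fun h => G.irrefl (h ▸ ha), hv⟩, ha⟩

lemma degIn_split {A B : Finset V} (hdisj : Disjoint A B) (u : V) :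
    degIn G (A ∪ B) u = degIn G A u + degIn G B u := by
  unfold degIn
  rw [Finset.filter_union]
  exact Finset.card_union_of_disjoint (Finset.disjoint_filter_filter hdisj)

lemma sum_ite_card (A : Finset V) (p : V → Prop) [DecidablePred p] :
    (∑ a ∈ A, if p a then 1 else 0) = (A.filter p).card := by
  rw [← Finset.sum_filter, Finset.card_eq_sum_ones]

lemma nested_handshake :
    ∀ (D D' : Finset V), D' ⊆ D →
      2 * edgesIn G D = 2 * edgesIn G D'
        + (∑ w ∈ D \ D', degIn G D w) + ∑ u ∈ D', degIn G (D \ D') u := by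
  intro D
  induction D using Finset.strongInduction with
  | H D ih =>
    intro D' hsub
    by_cases hEq : D \ D' = ∅
    · have hDD : D = D' := Finset.Subset.antisymm
        (fun a ha => by
          by_contra h
          exact Finset.notMem_empty a (hEq ▸ Finset.mem_sdiff.mpr ⟨ha, h⟩)) hsub
      subst hDD
      simp only [hEq, Finset.sum_empty, edgesIn_empty]
      have : ∀ u ∈ D, degIn G (∅ : Finset V) u = 0 := fun u _ => by simp [degIn]
      rw [Finset.sum_congr rfl this]
      simp
    · obtain ⟨w, hw⟩ := Finset.nonempty_iff_ne_empty.mpr hEq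
      have hwD : w ∈ D := (Finset.mem_sdiff.mp hw).1
      have hwD' : w ∉ D' := (Finset.mem_sdiff.mp hw).2
      set W := D \ D' with hW
      set Dm := D.erase w with hDm
      have hsub' : D' ⊆ Dm := fun a ha =>
        Finset.mem_erase.mpr ⟨fun h => hwD' (h ▸ ha), hsub ha⟩
      have hWe : Dm \ D' = W.erase w := by
        ext a
        simp only [hDm, hW, Finset.mem_sdiff, Finset.mem_erase]
        tauto
      have hIH := ih Dm (Finset.erase_ssubset hwD) D' hsub'
      have f1 : edgesIn G D = edgesIn G Dm + degIn G D w := edgesIn_erase G hwD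
      -- sum over W.erase w of degIn Dm versus degIn D
      have f3 : (∑ w' ∈ W.erase w, degIn G Dm w')
            + ((W.erase w).filter (fun w' => G.Adj w w')).card
          = ∑ w' ∈ W.erase w, degIn G D w' := by
        rw [← sum_ite_card]
        rw [← Finset.sum_add_distrib]
        apply Finset.sum_congr rfl
        intro w' hw'
        have hne : w' ≠ w := (Finset.mem_erase.mp hw').1
        have := degIn_erase_ne G (S := D) (v := w) (u := w') hne
        rw [← this, ← hDm]
        congr 1
        by_cases h : G.Adj w' w
        · rw [if_pos ((G.adj_comm w' w).mp h), if_pos ⟨h, hwD⟩]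
        · rw [if_neg (fun hc => h ((G.adj_comm w w').mp hc)), if_neg (fun hc => h hc.1)]
      have f4 : (∑ w' ∈ W, degIn G D w')
          = degIn G D w + ∑ w' ∈ W.erase w, degIn G D w' := by
        rw [← Finset.add_sum_erase _ _ hw]
      have f5 : (∑ u ∈ D', degIn G W u)
          = (∑ u ∈ D', degIn G (W.erase w) u) + (D'.filter (fun u => G.Adj w u)).card := by
        rw [← sum_ite_card, ← Finset.sum_add_distrib]
        apply Finset.sum_congr rfl
        intro u hu
        have hne : u ≠ w := fun h => hwD' (h ▸ hu)
        have := degIn_erase_ne G (S := W) (v := w) (u := u) hne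
        rw [← this]
        congr 1
        by_cases h : G.Adj u w
        · rw [if_pos ⟨h, hw⟩, if_pos h.symm]
        · rw [if_neg (fun hc => h hc.1), if_neg (fun hc => h hc.symm)]
      have g1 : degIn G D w = (D'.filter (fun u => G.Adj w u)).card
          + ((W.erase w).filter (fun w' => G.Adj w w')).card := by
        have hpart : D.erase w = D' ∪ (W.erase w) := by
          ext a
          simp only [Finset.mem_erase, Finset.mem_union, hW, Finset.mem_sdiff]
          constructor
          · rintro ⟨hne, haD⟩
            by_cases h : a ∈ D' <;> tauto
          · intro h
            rcases h with h | h
            · exact ⟨fun hc => hwD' (hc ▸ h), hsub h⟩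
            · exact ⟨h.1, h.2.1⟩
        have hdisj : Disjoint D' (W.erase w) := by
          rw [Finset.disjoint_left]
          intro a ha hc
          rw [Finset.mem_erase, hW, Finset.mem_sdiff] at hc
          exact hc.2.2 ha
        calc degIn G D w = degIn G (D.erase w) w := (degIn_self_erase G D w).symm
          _ = _ := by rw [hpart, degIn_split G hdisj]; rfl
      rw [hWe] at hIH
      omega

end Proof12
end FVS
namespace FVS
noncomputable section Proof12
open Finset
variable {V : Type*} [Fintype V] (G : SimpleGraph V) (x : V → ℝ)

lemma degIn_sdiff_split {D' D : Finset V} (hsub : D' ⊆ D) (u : V) :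
    degIn G D u = degIn G D' u + degIn G (D \ D') u := by
  have h1 : D' ∪ (D \ D') = D := Finset.union_sdiff_of_subset hsub
  have h2 : Disjoint D' (D \ D') := Finset.disjoint_sdiff
  have h3 := degIn_split G h2 (u := u)
  rw [h1] at h3
  exact h3

lemma fp_nested (hnn : ∀ u, 0 ≤ x u) {D' D : Finset V} (hsub : D' ⊆ D)
    (hWz : ∀ w ∈ D \ D', x w = 0) :
    fp G x D = fp G x D' + (edgesIn G D : ℝ) - edgesIn G D' - (D \ D').card
      - ∑ u ∈ D', (degIn G (D \ D') u : ℝ) * x u := by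
  have hcard : D'.card + (D \ D').card = D.card := by
    rw [add_comm]
    exact Finset.card_sdiff_add_card_eq_card hsub
  have hsum : ∑ u ∈ D, ((degIn G D u : ℝ) - 1) * x u
      = (∑ u ∈ D', ((degIn G D' u : ℝ) - 1) * x u)
        + ∑ u ∈ D', (degIn G (D \ D') u : ℝ) * x u := by
    rw [← Finset.sum_sdiff hsub]
    have hz : ∑ u ∈ D \ D', ((degIn G D u : ℝ) - 1) * x u = 0 :=
      Finset.sum_eq_zero fun u hu => by rw [hWz u hu, mul_zero]
    rw [hz, zero_add, ← Finset.sum_add_distrib]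
    apply Finset.sum_congr rfl
    intro u _
    have := degIn_sdiff_split G hsub u
    have hcast := congrArg (Nat.cast : ℕ → ℝ) this
    push_cast at hcast
    rw [hcast]
    ring
  unfold fp
  rw [hsum]
  have : (D.card : ℝ) = (D'.card : ℝ) + ((D \ D').card : ℝ) := by exact_mod_cast hcard.symm
  rw [this]
  ring

/-- Z-step lemma: if all newly added vertices have `x = 0`, the row restricted to
positive coordinates is unchanged. -/
lemma zstep (h13 : ∀ u, x u < 1/3) (hnn : ∀ u, 0 ≤ x u) {D' D : Finset V} (hsub : D' ⊆ D)
    (htD : fp G x D = 0) (htD' : fp G x D' = 0) (h2 : mind2 G D)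
    (hWz : ∀ w ∈ D \ D', x w = 0) :
    ∀ u, 0 < x u → rowWD G D u = rowWD G D' u := by
  classical
  set W := D \ D' with hW
  have hdiff := fp_nested G x hnn hsub hWz
  rw [htD, htD'] at hdiff
  -- (**)  eD - eD' = |W| + ∑_{u∈D'} degW u * x u
  have hstar : (edgesIn G D : ℝ) - edgesIn G D'
      = (W.card : ℝ) + ∑ u ∈ D', (degIn G W u : ℝ) * x u := by linarith
  have hhs := nested_handshake G D D' hsub
  have hdegW : 2 * (W.card : ℕ) ≤ ∑ w ∈ W, degIn G D w := by
    calc 2 * W.card = W.card * 2 := by ring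
      _ = ∑ _w ∈ W, 2 := by rw [Finset.sum_const, smul_eq_mul]
      _ ≤ ∑ w ∈ W, degIn G D w :=
          Finset.sum_le_sum fun w hw => h2 w (Finset.mem_sdiff.mp hw).1
  -- cast handshake
  have hhsR : 2 * (edgesIn G D : ℝ) = 2 * (edgesIn G D' : ℝ)
      + (∑ w ∈ W, (degIn G D w : ℝ)) + ∑ u ∈ D', (degIn G W u : ℝ) := by
    exact_mod_cast congrArg (Nat.cast : ℕ → ℝ) hhs
  have hdegWR : 2 * (W.card : ℝ) ≤ ∑ w ∈ W, (degIn G D w : ℝ) := by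
    exact_mod_cast hdegW
  have hbound : (∑ u ∈ D', (degIn G W u : ℝ)) ≤ 2 * ∑ u ∈ D', (degIn G W u : ℝ) * x u := by
    linarith
  have hsmall : 2 * (∑ u ∈ D', (degIn G W u : ℝ) * x u)
      ≤ (2/3) * ∑ u ∈ D', (degIn G W u : ℝ) := by
    rw [Finset.mul_sum, Finset.mul_sum]
    apply Finset.sum_le_sum
    intro u _
    have h1 := h13 u
    have h2' := hnn u
    have h3 : (0:ℝ) ≤ (degIn G W u : ℝ) := Nat.cast_nonneg _
    nlinarith
  have hCnonneg : (0:ℝ) ≤ ∑ u ∈ D', (degIn G W u : ℝ) :=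
    Finset.sum_nonneg fun u _ => Nat.cast_nonneg _
  have hCzero : (∑ u ∈ D', (degIn G W u : ℝ)) = 0 := by linarith
  have hCzeroN : (∑ u ∈ D', degIn G W u) = 0 := by exact_mod_cast hCzero
  have hdeg0 : ∀ u ∈ D', degIn G W u = 0 := by
    intro u hu
    exact (Finset.sum_eq_zero_iff.mp hCzeroN) u hu
  intro u hu
  unfold rowWD
  by_cases huD' : u ∈ D'
  · rw [if_pos huD', if_pos (hsub huD')]
    have := degIn_sdiff_split G hsub u
    rw [← hW, hdeg0 u huD', Nat.add_zero] at this
    rw [this]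
  · by_cases huD : u ∈ D
    · exact absurd (hWz u (Finset.mem_sdiff.mpr ⟨huD, huD'⟩)) (by linarith)
    · rw [if_neg huD, if_neg huD']

/-- a tight min-degree-2 set whose positive part is a single vertex is impossible. -/
lemma one_pos_contra (hnn : ∀ u, 0 ≤ x u) (h13 : ∀ u, x u < 1/3) {D : Finset V} {w : V}
    (ht : fp G x D = 0) (h2 : mind2 G D)
    (hw : D.filter (fun u => 0 < x u) = {w}) : False := by
  classical
  have hwD : w ∈ D := by
    have : w ∈ D.filter (fun u => 0 < x u) := hw ▸ Finset.mem_singleton_self w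
    exact (Finset.mem_filter.mp this).1
  have hxw : 0 < x w := by
    have : w ∈ D.filter (fun u => 0 < x u) := hw ▸ Finset.mem_singleton_self w
    exact (Finset.mem_filter.mp this).2
  have hq : 2 ≤ degIn G D w := h2 w hwD
  -- the weighted degree sum collapses to the single positive vertex
  have hSig : ∑ u ∈ D, ((degIn G D u : ℝ) - 1) * x u = ((degIn G D w : ℝ) - 1) * x w := by
    rw [← Finset.sum_filter_add_sum_filter_not D (fun u => 0 < x u), hw,
      Finset.sum_singleton]
    have hz : ∑ u ∈ D.filter (fun u => ¬ 0 < x u), ((degIn G D u : ℝ) - 1) * x u = 0 := by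
      apply Finset.sum_eq_zero
      intro u hu
      have := (Finset.mem_filter.mp hu).2
      have : x u = 0 := le_antisymm (not_lt.mp this) (hnn u)
      rw [this, mul_zero]
    rw [hz, add_zero]
  have htight : (edgesIn G D : ℝ) - D.card - ((degIn G D w : ℝ) - 1) * x w = 0 := by
    have := ht
    unfold fp at this
    rw [hSig] at this
    linarith
  -- handshake with D' = ∅
  have hhs := nested_handshake G D ∅ (Finset.empty_subset D)
  rw [Finset.sdiff_empty, Finset.sum_empty, edgesIn_empty, Nat.mul_zero, Nat.zero_add,
    Nat.add_zero] at hhs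
  have hdegsum : degIn G D w + 2 * (D.card - 1) ≤ ∑ u ∈ D, degIn G D u := by
    rw [← Finset.add_sum_erase _ _ hwD]
    have : 2 * (D.card - 1) ≤ ∑ u ∈ D.erase w, degIn G D u := by
      rw [← Finset.card_erase_of_mem hwD]
      calc 2 * (D.erase w).card = (D.erase w).card * 2 := by ring
        _ = ∑ _u ∈ D.erase w, 2 := by rw [Finset.sum_const, smul_eq_mul]
        _ ≤ _ := Finset.sum_le_sum fun u hu => h2 u (Finset.mem_of_mem_erase hu)
    omega
  have hcard1 : 1 ≤ D.card := Finset.one_le_card.mpr ⟨w, hwD⟩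
  -- real arithmetic contradiction
  have hER : 2 * (edgesIn G D : ℝ) ≥ (degIn G D w : ℝ) + 2 * ((D.card : ℝ) - 1) := by
    have h1 : degIn G D w + 2 * (D.card - 1) ≤ 2 * edgesIn G D := by omega
    have := (Nat.cast_le (α := ℝ)).mpr h1
    push_cast [Nat.cast_sub hcard1] at this
    linarith
  have hqR : (2:ℝ) ≤ (degIn G D w : ℝ) := by exact_mod_cast hq
  have h13w := h13 w
  rcases le_or_gt (edgesIn G D) D.card with hEn | hEn
  · have : (edgesIn G D : ℝ) ≤ (D.card : ℝ) := by exact_mod_cast hEn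
    nlinarith
  · have : (D.card : ℝ) + 1 ≤ (edgesIn G D : ℝ) := by exact_mod_cast hEn
    nlinarith

end Proof12
end FVS
namespace FVS
noncomputable section Proof12
open Finset
variable {V : Type*} [Fintype V] (G : SimpleGraph V) (x : V → ℝ)

lemma rowB_eq (S : Finset V) (d : V → ℝ) :
    (∑ u, rowWD G S u * d u) = ∑ u ∈ S, ((degIn G S u : ℝ) - 1) * d u := by
  have h1 : ∑ u ∈ S, rowWD G S u * d u = ∑ u, rowWD G S u * d u :=
    Finset.sum_subset (Finset.subset_univ S)
      (fun u _ huS => by simp only [rowWD]; rw [if_neg huS, zero_mul])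
  rw [← h1]
  apply Finset.sum_congr rfl
  intro u hu
  simp only [rowWD]
  rw [if_pos hu]

lemma extreme_no_direction (hx : PWDExtreme G x) (d : V → ℝ) (hd0 : d ≠ 0)
    (hsupp : ∀ u, ¬ 0 < x u → d u = 0)
    (horth : ∀ S : Finset V, fp G x S = 0 → (∑ u, rowWD G S u * d u) = 0) : False := by
  classical
  have hnn : ∀ u, 0 ≤ x u := hx.1.1
  have hfeas : ∀ S, fp G x S ≤ 0 := by
    intro S
    unfold fp
    linarith [hx.1.2 S]
  set B : Finset V → ℝ := fun S => ∑ u, rowWD G S u * d u with hB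
  set Ppos : Finset V := Finset.univ.filter (fun u => 0 < x u) with hPpos
  set E1 : Finset ℝ := insert (1:ℝ) (Ppos.image fun u => x u / (|d u| + 1)) with hE1
  set E2 : Finset ℝ := insert (1:ℝ)
    (((Finset.univ : Finset (Finset V)).filter (fun S => fp G x S ≠ 0)).image
      (fun S => (-(fp G x S)) / (|B S| + 1))) with hE2
  have hne1 : E1.Nonempty := ⟨1, Finset.mem_insert_self _ _⟩
  have hne2 : E2.Nonempty := ⟨1, Finset.mem_insert_self _ _⟩
  set ε : ℝ := min (E1.min' hne1) (E2.min' hne2) with hεdef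
  have hε1 : ∀ y ∈ E1, 0 < y := by
    intro y hy
    rcases Finset.mem_insert.mp hy with rfl | hy
    · norm_num
    · obtain ⟨u, hu, rfl⟩ := Finset.mem_image.mp hy
      rw [hPpos, Finset.mem_filter] at hu
      have : 0 < |d u| + 1 := by positivity
      exact div_pos hu.2 this
  have hε2 : ∀ y ∈ E2, 0 < y := by
    intro y hy
    rcases Finset.mem_insert.mp hy with rfl | hy
    · norm_num
    · obtain ⟨S, hS, rfl⟩ := Finset.mem_image.mp hy
      rw [Finset.mem_filter] at hS
      have h1 : fp G x S < 0 := lt_of_le_of_ne (hfeas S) hS.2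
      have : (0:ℝ) < |B S| + 1 := by positivity
      exact div_pos (by linarith) this
  have hεpos : 0 < ε := lt_min ((Finset.lt_min'_iff E1 hne1).mpr hε1)
    ((Finset.lt_min'_iff E2 hne2).mpr hε2)
  -- the two perturbed points are feasible
  have hfeasperturb : ∀ t : ℝ, |t| ≤ ε → PWD G (fun u => x u + t * d u) := by
    intro t ht
    constructor
    · intro u
      by_cases hu : 0 < x u
      · have hmem : x u / (|d u| + 1) ∈ E1 := by
          rw [hE1]
          exact Finset.mem_insert_of_mem
            (Finset.mem_image_of_mem _ (Finset.mem_filter.mpr ⟨Finset.mem_univ u, hu⟩))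
        have h1 : ε ≤ x u / (|d u| + 1) :=
          le_trans (min_le_left _ _) (Finset.min'_le E1 _ hmem)
        have hden : (0:ℝ) < |d u| + 1 := by positivity
        have h2 : ε * (|d u| + 1) ≤ x u := by
          rw [← le_div_iff₀ hden]
          exact h1
        have h3 : |t * d u| ≤ ε * |d u| := by
          rw [abs_mul]
          exact mul_le_mul_of_nonneg_right ht (abs_nonneg _)
        have h4 : -(ε * |d u|) ≤ t * d u := neg_le_of_abs_le h3
        have : ε * |d u| ≤ x u - ε := by nlinarith
        simp only
        linarith
      · have hx0 : x u = 0 := le_antisymm (not_lt.mp hu) (hnn u)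
        have hdz : d u = 0 := hsupp u hu
        simp only [hx0, hdz, mul_zero, add_zero, le_refl]
    · intro S
      have hexp : ∑ u ∈ S, ((degIn G S u : ℝ) - 1) * (x u + t * d u)
          = (∑ u ∈ S, ((degIn G S u : ℝ) - 1) * x u) + t * B S := by
        simp only [hB]
        rw [rowB_eq, Finset.mul_sum, ← Finset.sum_add_distrib]
        apply Finset.sum_congr rfl
        intro u _
        ring
      show (edgesIn G S : ℝ) - S.card ≤ ∑ u ∈ S, ((degIn G S u : ℝ) - 1) * (x u + t * d u)
      rw [hexp]
      by_cases hS : fp G x S = 0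
      · have hB0 : B S = 0 := horth S hS
        unfold fp at hS
        rw [hB0]
        linarith
      · have hmem : (-(fp G x S)) / (|B S| + 1) ∈ E2 := by
          rw [hE2]
          exact Finset.mem_insert_of_mem
            (Finset.mem_image_of_mem _ (Finset.mem_filter.mpr ⟨Finset.mem_univ S, hS⟩))
        have h1 : ε ≤ (-(fp G x S)) / (|B S| + 1) :=
          le_trans (min_le_right _ _) (Finset.min'_le E2 _ hmem)
        have hden : (0:ℝ) < |B S| + 1 := by positivity
        have h2 : ε * (|B S| + 1) ≤ -(fp G x S) := by
          rw [← le_div_iff₀ hden]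
          exact h1
        have h3 : |t * B S| ≤ ε * |B S| := by
          rw [abs_mul]
          exact mul_le_mul_of_nonneg_right ht (abs_nonneg _)
        have h4 : -(ε * |B S|) ≤ t * B S := neg_le_of_abs_le h3
        have h5 : fp G x S ≤ t * B S := by nlinarith
        unfold fp at h5
        linarith
  have hfx1 : PWD G (fun u => x u + ε * d u) := hfeasperturb ε (by rw [abs_of_pos hεpos])
  have hfx2 : PWD G (fun u => x u + (-ε) * d u) := by
    apply hfeasperturb
    rw [abs_neg, abs_of_pos hεpos]
  have heq := hx.2 (fun u => x u + ε * d u) (fun u => x u + (-ε) * d u) (1/2) hfx1 hfx2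
    (by norm_num) (by norm_num) (fun v => by ring)
  apply hd0
  funext u
  have := congrFun heq u
  have : d u = 0 := by
    by_contra hdu
    have hε2 : ε * d u ≠ -ε * d u := by
      intro hc
      have : 2 * ε * d u = 0 := by linarith
      rcases mul_eq_zero.mp this with h | h
      · rcases mul_eq_zero.mp h with h' | h' <;> [linarith; linarith]
      · exact hdu h
    exact hε2 (by linarith [congrFun heq u])
  exact this

end Proof12
end FVS
namespace FVS
noncomputable section Proof12
open Finset
variable {V : Type*} [Fintype V] (G : SimpleGraph V) (x : V → ℝ)

/-- family of tight sets of minimum induced degree `2`. -/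
def tset : Finset (Finset V) :=
  Finset.univ.filter (fun S => fp G x S = 0 ∧ mind2 G S)

/-- row vector restricted to the positive coordinates of `x`. -/
def tauR (S : Finset V) : V → ℝ := fun u => if 0 < x u then rowWD G S u else 0

lemma mem_tset {S : Finset V} : S ∈ tset G x ↔ fp G x S = 0 ∧ mind2 G S := by
  rw [tset, Finset.mem_filter]
  simp

lemma exists_maximal_chain :
    ∃ L : Finset (Finset V), L ⊆ tset G x ∧ IsChain (· ⊆ ·) (L : Set (Finset V)) ∧
      ∀ S ∈ tset G x, (∀ T ∈ L, S ⊆ T ∨ T ⊆ S) → S ∈ L := by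
  classical
  set C : Finset (Finset (Finset V)) :=
    Finset.univ.filter (fun L => L ⊆ tset G x ∧ IsChain (· ⊆ ·) (L : Set (Finset V))) with hC
  have hCne : C.Nonempty := by
    refine ⟨∅, ?_⟩
    rw [hC, Finset.mem_filter]
    refine ⟨Finset.mem_univ _, Finset.empty_subset _, ?_⟩
    simp [IsChain]
  obtain ⟨L, hL, hLmax⟩ := Finset.exists_max_image C Finset.card hCne
  rw [hC, Finset.mem_filter] at hL
  refine ⟨L, hL.2.1, hL.2.2, ?_⟩
  intro S hS hcomp
  by_contra hSL
  have hins : insert S L ∈ C := by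
    rw [hC, Finset.mem_filter]
    refine ⟨Finset.mem_univ _, ?_, ?_⟩
    · intro T hT
      rcases Finset.mem_insert.mp hT with rfl | hT
      · exact hS
      · exact hL.2.1 hT
    · rw [Finset.coe_insert]
      apply hL.2.2.insert
      intro T hT _
      exact hcomp T hT
  have := hLmax _ hins
  rw [Finset.card_insert_of_notMem hSL] at this
  omega

lemma tau_eq_of_core (feas : ∀ S, fp G x S ≤ 0) (hnn : ∀ u, 0 ≤ x u) (h13 : ∀ u, x u < 1/3)
    {S : Finset V} (ht : fp G x S = 0) :
    tauR G x S = tauR G x (coreS G S) := by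
  funext u
  unfold tauR
  by_cases hu : 0 < x u
  · rw [if_pos hu, if_pos hu, (coreS_tight G x feas hnn h13 S ht).2 u hu]
  · rw [if_neg hu, if_neg hu]

lemma jain_span (feas : ∀ S, fp G x S ≤ 0) (hnn : ∀ u, 0 ≤ x u) (h13 : ∀ u, x u < 1/3)
    {L : Finset (Finset V)} (hLsub : L ⊆ tset G x)
    (hLchain : IsChain (· ⊆ ·) (L : Set (Finset V)))
    (hLmax : ∀ S ∈ tset G x, (∀ T ∈ L, S ⊆ T ∨ T ⊆ S) → S ∈ L) :
    ∀ S ∈ tset G x, tauR G x S ∈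
      Submodule.span ℝ ((L.image (tauR G x) : Finset (V → ℝ)) : Set (V → ℝ)) := by
  classical
  suffices h : ∀ n : ℕ, ∀ S ∈ tset G x,
      (L.filter (fun T => ¬(S ⊆ T ∨ T ⊆ S))).card ≤ n → tauR G x S ∈
        Submodule.span ℝ ((L.image (tauR G x) : Finset (V → ℝ)) : Set (V → ℝ)) by
    intro S hS
    exact h _ S hS le_rfl
  intro n
  induction n with
  | zero =>
    intro S hS hcard
    have hempty : L.filter (fun T => ¬(S ⊆ T ∨ T ⊆ S)) = ∅ :=
      Finset.card_eq_zero.mp (Nat.le_zero.mp hcard)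
    have hcomp : ∀ T ∈ L, S ⊆ T ∨ T ⊆ S := by
      intro T hT
      by_contra hc
      have : T ∈ L.filter (fun T => ¬(S ⊆ T ∨ T ⊆ S)) := Finset.mem_filter.mpr ⟨hT, hc⟩
      rw [hempty] at this
      exact Finset.notMem_empty _ this
    have hSL := hLmax S hS hcomp
    exact Submodule.subset_span (Finset.mem_coe.mpr (Finset.mem_image_of_mem _ hSL))
  | succ n ih =>
    intro S hS hcard
    by_cases h0 : L.filter (fun T => ¬(S ⊆ T ∨ T ⊆ S)) = ∅
    · have hcomp : ∀ T ∈ L, S ⊆ T ∨ T ⊆ S := by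
        intro T hT
        by_contra hc
        have : T ∈ L.filter (fun T => ¬(S ⊆ T ∨ T ⊆ S)) := Finset.mem_filter.mpr ⟨hT, hc⟩
        rw [h0] at this
        exact Finset.notMem_empty _ this
      exact Submodule.subset_span
        (Finset.mem_coe.mpr (Finset.mem_image_of_mem _ (hLmax S hS hcomp)))
    · obtain ⟨T, hT⟩ := Finset.nonempty_iff_ne_empty.mpr h0
      have hTL : T ∈ L := (Finset.mem_filter.mp hT).1
      have hTinc : ¬(S ⊆ T ∨ T ⊆ S) := (Finset.mem_filter.mp hT).2
      have hSt : fp G x S = 0 ∧ mind2 G S := (mem_tset G x).mp hS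
      have hTt : fp G x T = 0 ∧ mind2 G T := (mem_tset G x).mp (hLsub hTL)
      obtain ⟨htU, htI, hcross⟩ := tight_uncross G x feas h13 hSt.1 hTt.1
      have hUmem : S ∪ T ∈ tset G x :=
        (mem_tset G x).mpr ⟨htU, mind2_union G hSt.2 hTt.2⟩
      have hCmem : coreS G (S ∩ T) ∈ tset G x :=
        (mem_tset G x).mpr ⟨(coreS_tight G x feas hnn h13 _ htI).1, mind2_coreS G _⟩
      -- the τ-identity
      have hkey : tauR G x S = tauR G x (S ∪ T) + tauR G x (coreS G (S ∩ T)) - tauR G x T := by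
        funext u
        simp only [Pi.add_apply, Pi.sub_apply]
        unfold tauR
        by_cases hu : 0 < x u
        · simp only [if_pos hu]
          have hadd := row_additive G hcross u
          have hcore := (coreS_tight G x feas hnn h13 _ htI).2 u hu
          rw [← hcore]
          linarith
        · simp only [if_neg hu]
          ring
      -- comparability transfer
      have hcompU : ∀ R ∈ L, (S ⊆ R ∨ R ⊆ S) → (S ∪ T ⊆ R ∨ R ⊆ S ∪ T) := by
        intro R hRL hcomp
        rcases hcomp with h | h
        · -- S ⊆ R : compare T and R in the chain
          by_cases hRT : R = T
          · exact absurd (Or.inl (hRT ▸ h)) hTinc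
          · rcases hLchain (Finset.mem_coe.mpr hTL) (Finset.mem_coe.mpr hRL) (Ne.symm hRT)
                with hTR | hRT'
            · exact Or.inl (Finset.union_subset h hTR)
            · exact absurd (Or.inl (h.trans hRT' : S ⊆ T)) (by tauto)
        · exact Or.inr (h.trans Finset.subset_union_left)
      have hcompI : ∀ R ∈ L, (S ⊆ R ∨ R ⊆ S) → (coreS G (S ∩ T) ⊆ R ∨ R ⊆ coreS G (S ∩ T)) := by
        intro R hRL hcomp
        rcases hcomp with h | h
        · exact Or.inl (((coreS_subset G _).trans Finset.inter_subset_left).trans h)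
        · -- R ⊆ S : compare R and T
          by_cases hRT : R = T
          · exact absurd (Or.inr (hRT ▸ h)) hTinc
          · rcases hLchain (Finset.mem_coe.mpr hRL) (Finset.mem_coe.mpr hTL) hRT
                with hRT' | hTR
            · -- R ⊆ T, so R ⊆ S ∩ T and R is mind2, hence R ⊆ core
              have hRmem := (mem_tset G x).mp (hLsub hRL)
              exact Or.inr (subset_coreS G (Finset.subset_inter h hRT') hRmem.2)
            · exact absurd (Or.inl (hTR.trans h : T ⊆ S)) (by tauto)
      -- measures decrease
      have hmeasure : ∀ (A : Finset V),
          (∀ R ∈ L, (S ⊆ R ∨ R ⊆ S) → (A ⊆ R ∨ R ⊆ A)) → (A ⊆ T ∨ T ⊆ A) →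
          (L.filter (fun R => ¬(A ⊆ R ∨ R ⊆ A))).card ≤ n := by
        intro A htrans hAT
        have hsub2 : L.filter (fun R => ¬(A ⊆ R ∨ R ⊆ A))
            ⊆ (L.filter (fun R => ¬(S ⊆ R ∨ R ⊆ S))).erase T := by
          intro R hR
          rw [Finset.mem_filter] at hR
          rw [Finset.mem_erase, Finset.mem_filter]
          refine ⟨?_, hR.1, ?_⟩
          · rintro rfl
            exact hR.2 hAT
          · intro hc
            exact hR.2 (htrans R hR.1 hc)
        calc (L.filter (fun R => ¬(A ⊆ R ∨ R ⊆ A))).card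
            ≤ ((L.filter (fun R => ¬(S ⊆ R ∨ R ⊆ S))).erase T).card :=
              Finset.card_le_card hsub2
          _ ≤ (L.filter (fun R => ¬(S ⊆ R ∨ R ⊆ S))).card - 1 := by
              rw [Finset.card_erase_of_mem hT]
          _ ≤ n := by omega
      have hUcard := hmeasure (S ∪ T) hcompU (Or.inr Finset.subset_union_right)
      have hIcard := hmeasure (coreS G (S ∩ T))
        hcompI (Or.inl ((coreS_subset G _).trans Finset.inter_subset_right))
      have hUspan := ih (S ∪ T) hUmem hUcard
      have hIspan := ih (coreS G (S ∩ T)) hCmem hIcard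
      have hTspan : tauR G x T ∈
          Submodule.span ℝ ((L.image (tauR G x) : Finset (V → ℝ)) : Set (V → ℝ)) :=
        Submodule.subset_span (Finset.mem_coe.mpr (Finset.mem_image_of_mem _ hTL))
      rw [hkey]
      exact Submodule.sub_mem _ (Submodule.add_mem _ hUspan hIspan) hTspan

end Proof12
end FVS
namespace FVS
noncomputable section Proof12
open Finset
variable {V : Type*} [Fintype V] (G : SimpleGraph V) (x : V → ℝ)

lemma tau_support {T : Finset V} (hT : T ∈ tset G x) :
    Finset.univ.filter (fun u => tauR G x T u ≠ 0) = T.filter (fun u => 0 < x u) := by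
  obtain ⟨ht, h2⟩ := (mem_tset G x).mp hT
  ext u
  simp only [Finset.mem_filter, Finset.mem_univ, true_and]
  unfold tauR
  by_cases hu : 0 < x u
  · rw [if_pos hu]
    unfold rowWD
    by_cases huT : u ∈ T
    · rw [if_pos huT]
      have hq : 2 ≤ degIn G T u := h2 u huT
      have hqR : (2:ℝ) ≤ (degIn G T u : ℝ) := by exact_mod_cast hq
      constructor
      · intro _; exact ⟨huT, hu⟩
      · intro _; intro hc; linarith
    · rw [if_neg huT]
      simp [huT]
  · rw [if_neg hu]
    simp only [ne_eq, not_true_eq_false, false_iff, not_and]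
    intro _
    exact hu

lemma tau_eq_of_subset_same_pos (h13 : ∀ u, x u < 1/3) (hnn : ∀ u, 0 ≤ x u)
    {T T' : Finset V} (hT : T ∈ tset G x) (hT' : T' ∈ tset G x) (hsub : T ⊆ T')
    (hsame : T.filter (fun u => 0 < x u) = T'.filter (fun u => 0 < x u)) :
    tauR G x T' = tauR G x T := by
  obtain ⟨ht, h2⟩ := (mem_tset G x).mp hT
  obtain ⟨ht', h2'⟩ := (mem_tset G x).mp hT'
  have hWz : ∀ w ∈ T' \ T, x w = 0 := by
    intro w hw
    rw [Finset.mem_sdiff] at hw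
    by_contra hc
    have hpos : 0 < x w := lt_of_le_of_ne (hnn w) (Ne.symm hc)
    have : w ∈ T'.filter (fun u => 0 < x u) := Finset.mem_filter.mpr ⟨hw.1, hpos⟩
    rw [← hsame] at this
    exact hw.2 (Finset.mem_filter.mp this).1
  have hrow := zstep G x h13 hnn hsub ht' ht h2' hWz
  funext u
  unfold tauR
  by_cases hu : 0 < x u
  · rw [if_pos hu, if_pos hu, hrow u hu]
  · rw [if_neg hu, if_neg hu]

end Proof12
end FVS
namespace FVS

/-- if `G` is not a pseudoforest, then every extreme point `x` of the
weak density polyhedron `P_WD(G)` has a coordinate `x_u ≥ 1/3`. -/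
theorem stmt_12 {V : Type*} [Fintype V] (G : SimpleGraph V)
    (hG : ¬ IsPseudoforest G) (x : V → ℝ) (hx : PWDExtreme G x) :
    ∃ u : V, 1 / 3 ≤ x u := by
  classical
  by_contra hcon
  push_neg at hcon
  have hnn : ∀ u, 0 ≤ x u := hx.1.1
  have hcons := hx.1.2
  have feas : ∀ S, fp G x S ≤ 0 := fun S => by unfold fp; linarith [hcons S]
  set Ppos : Finset V := Finset.univ.filter (fun u => 0 < x u) with hPposdef
  -- a positive coordinate exists since G is not a pseudoforest
  have hPne : Ppos.Nonempty := by
    unfold IsPseudoforest at hG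
    push_neg at hG
    obtain ⟨Ccomp, hCcomp⟩ := hG
    set S0 : Finset V := Finset.univ.filter
      (fun v => G.connectedComponentMk v = Ccomp) with hS0
    have hedge : edgesIn G S0 = (G.edgeFinset.filter
        (fun e => ∀ v ∈ e, G.connectedComponentMk v = Ccomp)).card := by
      unfold edgesIn
      congr 1
      apply Finset.filter_congr
      intro e _
      constructor
      · intro h v hv
        exact (Finset.mem_filter.mp (h v hv)).2
      · intro h v hv
        exact Finset.mem_filter.mpr ⟨Finset.mem_univ _, h v hv⟩
    have hlt : S0.card < edgesIn G S0 := by rw [hedge]; exact hCcomp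
    by_contra hPe
    rw [Finset.not_nonempty_iff_eq_empty] at hPe
    have hx0 : ∀ u, x u = 0 := by
      intro u
      by_contra h
      have hpos : 0 < x u := lt_of_le_of_ne (hnn u) (Ne.symm h)
      have : u ∈ Ppos := Finset.mem_filter.mpr ⟨Finset.mem_univ _, hpos⟩
      rw [hPe] at this
      exact Finset.notMem_empty _ this
    have hfS0 := feas S0
    unfold fp at hfS0
    have hz : ∑ u ∈ S0, ((degIn G S0 u : ℝ) - 1) * x u = 0 :=
      Finset.sum_eq_zero fun u _ => by rw [hx0, mul_zero]
    rw [hz] at hfS0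
    have hle : (edgesIn G S0 : ℝ) ≤ (S0.card : ℝ) := by linarith
    have : edgesIn G S0 ≤ S0.card := by exact_mod_cast hle
    omega
  have hPcard1 : 1 ≤ Ppos.card := Finset.card_pos.mpr hPne
  obtain ⟨L, hLsub, hLchain, hLmax⟩ := exists_maximal_chain G x
  by_cases hsing : ∃ T ∈ L, (T.filter (fun u => 0 < x u)).card = 1
  · obtain ⟨T, hTL, hT1⟩ := hsing
    obtain ⟨w, hw⟩ := Finset.card_eq_one.mp hT1
    have hTt := (mem_tset G x).mp (hLsub hTL)
    exact one_pos_contra G x hnn hcon hTt.1 hTt.2 hw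
  · push_neg at hsing
    set W0 : Finset (V → ℝ) := (L.image (tauR G x)).erase 0 with hW0def
    -- cardinality bound on W0
    have hcardW0 : W0.card ≤ Ppos.card - 1 := by
      have hmaps : ∀ w ∈ W0, (Finset.univ.filter (fun u => w u ≠ 0)).card
          ∈ Finset.Icc 2 Ppos.card := by
        intro w hw
        rw [hW0def, Finset.mem_erase] at hw
        obtain ⟨T, hTL, rfl⟩ := Finset.mem_image.mp hw.2
        rw [tau_support G x (hLsub hTL)]
        rw [Finset.mem_Icc]
        constructor
        · have hne1 : (T.filter (fun u => 0 < x u)).card ≠ 1 := hsing T hTL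
          have hge1 : 1 ≤ (T.filter (fun u => 0 < x u)).card := by
            rw [Nat.one_le_iff_ne_zero, Ne, Finset.card_eq_zero]
            intro hzero
            apply hw.1
            funext u
            by_cases hu : 0 < x u
            · by_cases huT : u ∈ T
              · exact absurd (Finset.mem_filter.mpr ⟨huT, hu⟩)
                  (by rw [hzero]; exact Finset.notMem_empty u)
              · show tauR G x T u = 0
                unfold tauR rowWD
                rw [if_pos hu, if_neg huT]
            · show tauR G x T u = 0
              unfold tauR
              rw [if_neg hu]
          omega
        · apply Finset.card_le_card
          intro u hu
          rw [Finset.mem_filter] at hu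
          exact Finset.mem_filter.mpr ⟨Finset.mem_univ _, hu.2⟩
      have hinj : Set.InjOn (fun w => (Finset.univ.filter (fun u => w u ≠ 0)).card)
          (W0 : Set (V → ℝ)) := by
        intro w hwmem w' hw'mem heq
        rw [Finset.mem_coe, hW0def, Finset.mem_erase] at hwmem hw'mem
        obtain ⟨T, hTL, rfl⟩ := Finset.mem_image.mp hwmem.2
        obtain ⟨T', hT'L, rfl⟩ := Finset.mem_image.mp hw'mem.2
        simp only at heq
        rw [tau_support G x (hLsub hTL), tau_support G x (hLsub hT'L)] at heq
        by_cases hTT : T = T'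
        · rw [hTT]
        · rcases hLchain (Finset.mem_coe.mpr hTL) (Finset.mem_coe.mpr hT'L) hTT
            with hsub | hsub
          · have hfilt : T.filter (fun u => 0 < x u) = T'.filter (fun u => 0 < x u) :=
              Finset.eq_of_subset_of_card_le
                (Finset.filter_subset_filter _ hsub) (le_of_eq heq.symm)
            exact (tau_eq_of_subset_same_pos G x hcon hnn (hLsub hTL) (hLsub hT'L)
              hsub hfilt).symm
          · have hfilt : T'.filter (fun u => 0 < x u) = T.filter (fun u => 0 < x u) :=
              Finset.eq_of_subset_of_card_le
                (Finset.filter_subset_filter _ hsub) (le_of_eq heq)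
            exact tau_eq_of_subset_same_pos G x hcon hnn (hLsub hT'L) (hLsub hTL) hsub hfilt
      have := Finset.card_le_card_of_injOn _ hmaps hinj
      rw [Nat.card_Icc] at this
      omega
    -- linear algebra: find a nonzero direction supported on Ppos orthogonal to W0
    set Φ : (↥Ppos → ℝ) →ₗ[ℝ] (↥W0 → ℝ) :=
      LinearMap.pi (fun w : ↥W0 =>
        ∑ u : ↥Ppos, ((w : V → ℝ) (u : V)) • (LinearMap.proj u : (↥Ppos → ℝ) →ₗ[ℝ] ℝ))
      with hΦdef
    have hΦnotinj : ¬ Function.Injective Φ := by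
      intro hinj
      have h1 := LinearMap.finrank_le_finrank_of_injective hinj
      rw [Module.finrank_pi, Module.finrank_pi, Fintype.card_coe, Fintype.card_coe] at h1
      omega
    rw [Function.not_injective_iff] at hΦnotinj
    obtain ⟨a, b, hab, habne⟩ := hΦnotinj
    set d0 : ↥Ppos → ℝ := a - b with hd0def
    have hd0ne : d0 ≠ 0 := sub_ne_zero.mpr habne
    have hΦd0 : Φ d0 = 0 := by rw [hd0def, map_sub, hab, sub_self]
    set d : V → ℝ := fun u => if h : u ∈ Ppos then d0 ⟨u, h⟩ else 0 with hddef
    have hdne : d ≠ 0 := by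
      intro hc
      apply hd0ne
      funext p
      have := congrFun hc p.1
      rw [hddef] at this
      simp only [dif_pos p.2] at this
      rw [this]
      rfl
    have hdsupp : ∀ u, ¬ 0 < x u → d u = 0 := by
      intro u hu
      show (if h : u ∈ Ppos then d0 ⟨u, h⟩ else 0) = 0
      exact dif_neg (show ¬ u ∈ Ppos from fun hc => hu (Finset.mem_filter.mp hc).2)
    -- orthogonality to all elements of W0
    have horthW : ∀ w ∈ W0, (∑ u, w u * d u) = 0 := by
      intro w hwmem
      have hcomp := congrFun hΦd0 ⟨w, hwmem⟩
      rw [hΦdef] at hcomp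
      simp only [LinearMap.pi_apply, LinearMap.coe_sum, Finset.sum_apply,
        LinearMap.smul_apply, LinearMap.proj_apply, smul_eq_mul, Pi.zero_apply] at hcomp
      have hconv : (∑ u, w u * d u) = ∑ u : ↥Ppos, w (u : V) * d0 u := by
        calc (∑ u, w u * d u) = ∑ u ∈ Ppos, w u * d u := by
              rw [eq_comm]
              apply Finset.sum_subset (Finset.subset_univ Ppos)
              intro u _ hu
              rw [hddef]
              simp only [dif_neg hu, mul_zero]
          _ = ∑ u : ↥Ppos, w (u : V) * d (u : V) :=
              (Finset.sum_coe_sort Ppos (fun u => w u * d u)).symm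
          _ = ∑ u : ↥Ppos, w (u : V) * d0 u := by
              apply Finset.sum_congr rfl
              intro u _
              congr 1
              rw [hddef]
              simp only [dif_pos u.2]
      rw [hconv]
      exact hcomp
    -- the linear functional given by pairing with d
    set β : (V → ℝ) →ₗ[ℝ] ℝ :=
      (∑ u : V, (d u) • (LinearMap.proj u : (V → ℝ) →ₗ[ℝ] ℝ)) with hβdef
    have hβapp : ∀ v : V → ℝ, β v = ∑ u, v u * d u := by
      intro v
      rw [hβdef]
      simp only [LinearMap.coe_sum, Finset.sum_apply, LinearMap.smul_apply,
        LinearMap.proj_apply, smul_eq_mul]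
      exact Finset.sum_congr rfl fun u _ => mul_comm _ _
    have hspan : Submodule.span ℝ ((L.image (tauR G x) : Finset (V → ℝ)) : Set (V → ℝ))
        ≤ LinearMap.ker β := by
      rw [Submodule.span_le]
      intro w hwmem
      rw [SetLike.mem_coe, LinearMap.mem_ker, hβapp]
      rcases eq_or_ne w 0 with rfl | hne
      · simp
      · exact horthW w (Finset.mem_erase.mpr ⟨hne, Finset.mem_coe.mp hwmem⟩)
    have horth : ∀ S : Finset V, fp G x S = 0 → (∑ u, rowWD G S u * d u) = 0 := by
      intro S hS
      have h1 : (∑ u, rowWD G S u * d u) = ∑ u, tauR G x S u * d u := by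
        apply Finset.sum_congr rfl
        intro u _
        by_cases hu : 0 < x u
        · unfold tauR
          rw [if_pos hu]
        · rw [hdsupp u hu, mul_zero, mul_zero]
      have h2 := tau_eq_of_core G x feas hnn hcon hS
      have h3 := jain_span G x feas hnn hcon hLsub hLchain hLmax (coreS G S)
        ((mem_tset G x).mpr ⟨(coreS_tight G x feas hnn hcon S hS).1, mind2_coreS G S⟩)
      have h4 : β (tauR G x (coreS G S)) = 0 := hspan h3
      rw [hβapp] at h4
      rw [h1, h2]
      exact h4
    exact extreme_no_direction G x hx d hdne hdsupp horth

end FVS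
end

section
/- Let G=(V,E) be a finite undirected graph and let x ∈ ℝ^V satisfy x_u < 1/2 for all u ∈ V. Then the set function f_x : 2^V → ℝ defined by f_x(S) := |E[S]| − |S| − Σ_{u∈S}(d_S(u) − 1)x_u is supermodular, i.e., f_x(A) + f_x(B) ≤ f_x(A∩B) + f_x(A∪B) for all A, B ⊆ V. -/
/- Common definitions for the polyhedral study of FVS / PFDS. -/

open scoped Classical
open Finset

/-!
Writing `w(u, v) = (1 - x_u - x_v) / 2` for adjacent `u, v` and `0` otherwise, the handshake
lemma `2 |E[S]| = Σ_{u ∈ S} d_S(u)` turns `f_x` into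
`f_x(S) = Σ_{(u, v) ∈ S × S} w(u, v) + Σ_{u ∈ S} (x_u - 1)`.
The second sum is modular, and the first is supermodular because `x < 1/2` makes `w ≥ 0`,
while `(A × A) ∩ (B × B) = (A ∩ B) × (A ∩ B)` and `(A × A) ∪ (B × B) ⊆ (A ∪ B) × (A ∪ B)`.
-/

namespace FVS

open SimpleGraph

theorem _root_.Finset.sum_product_self_add_sum_product_self_le {α M : Type*} [DecidableEq α]
    [AddCommMonoid M] [PartialOrder M] [IsOrderedAddMonoid M] {f : α × α → M}
    (hf : ∀ p, 0 ≤ f p) (A B : Finset α) :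
    ∑ p ∈ A ×ˢ A, f p + ∑ p ∈ B ×ˢ B, f p ≤
      ∑ p ∈ (A ∩ B) ×ˢ (A ∩ B), f p + ∑ p ∈ (A ∪ B) ×ˢ (A ∪ B), f p := by
  rw [← sum_union_inter, add_comm, product_inter_product]
  gcongr
  · exact fun p _ _ => hf p
  · exact union_subset (product_subset_product subset_union_left subset_union_left)
      (product_subset_product subset_union_right subset_union_right)

section Density

variable {V : Type*} (G : SimpleGraph V)

noncomputable def pairWeight (x : V → ℝ) (p : V × V) : ℝ :=
  if G.Adj p.1 p.2 then (1 - x p.1 - x p.2) / 2 else 0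

theorem pairWeight_nonneg {x : V → ℝ} (hx : ∀ u, x u < 1 / 2) (p : V × V) :
    0 ≤ pairWeight G x p := by
  unfold pairWeight
  split_ifs
  · linarith [hx p.1, hx p.2]
  · rfl

variable [Fintype V] (S : Finset V)

theorem sum_product_ite_adj_fst {R : Type*} [NonAssocSemiring R] (g : V → R) :
    ∑ p ∈ S ×ˢ S, (if G.Adj p.1 p.2 then g p.1 else 0) = ∑ u ∈ S, (degIn G S u : R) * g u := by
  rw [sum_product]
  refine sum_congr rfl fun u _ => ?_
  rw [← sum_filter]
  dsimp only
  rw [sum_const, nsmul_eq_mul, degIn]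

theorem sum_product_ite_adj_snd {R : Type*} [NonAssocSemiring R] (g : V → R) :
    ∑ p ∈ S ×ˢ S, (if G.Adj p.1 p.2 then g p.2 else 0) = ∑ u ∈ S, (degIn G S u : R) * g u := by
  rw [← sum_product_ite_adj_fst, sum_product_right, sum_product]
  simp only [G.adj_comm]

theorem edgeFinset_spanningCoe_induce :
    (G.induce (S : Set V)).spanningCoe.edgeFinset = G.edgeFinset.filter fun e => ∀ v ∈ e, v ∈ S := by
  ext e
  induction e using Sym2.ind with
  | _ u v =>
    simp only [mem_edgeFinset, mem_edgeSet, map_adj, mem_filter, Sym2.mem_iff, forall_eq_or_imp,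
      forall_eq]
    simp only [comap_adj, Function.Embedding.subtype_apply, Subtype.exists, exists_and_left,
      exists_prop, ↓existsAndEq, and_true, true_and]
    tauto

theorem degree_spanningCoe_induce {u : V} (hu : u ∈ S) :
    (G.induce (S : Set V)).spanningCoe.degree u = degIn G S u := by
  rw [← card_neighborFinset_eq_degree, degIn]
  congr 1
  ext v
  simp [hu, and_comm]

theorem degree_spanningCoe_induce_of_notMem {u : V} (hu : u ∉ S) :
    (G.induce (S : Set V)).spanningCoe.degree u = 0 := by
  rw [← card_neighborFinset_eq_degree, card_eq_zero]
  ext v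
  simp [hu]

theorem two_mul_edgesIn : 2 * edgesIn G S = ∑ u ∈ S, degIn G S u := by
  rw [edgesIn, ← edgeFinset_spanningCoe_induce, ← sum_degrees_eq_twice_card_edges,
    ← sum_subset (subset_univ S) fun u _ hu => degree_spanningCoe_induce_of_notMem G S hu]
  exact sum_congr rfl fun u hu => degree_spanningCoe_induce G S hu

theorem fWD_eq_sum_pairWeight (x : V → ℝ) :
    fWD G x S = ∑ p ∈ S ×ˢ S, pairWeight G x p + ∑ u ∈ S, (x u - 1) := by
  have hsplit : ∀ p : V × V, pairWeight G x p = ((if G.Adj p.1 p.2 then 1 else 0)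
      - (if G.Adj p.1 p.2 then x p.1 else 0) - (if G.Adj p.1 p.2 then x p.2 else 0)) / 2 := by
    intro p
    unfold pairWeight
    split_ifs <;> ring
  have hedges : ∑ p ∈ S ×ˢ S, (if G.Adj p.1 p.2 then (1 : ℝ) else 0) = 2 * edgesIn G S := by
    rw [sum_product_ite_adj_fst G S fun _ => (1 : ℝ)]
    simp only [mul_one]
    exact_mod_cast (two_mul_edgesIn G S).symm
  simp only [hsplit, ← sum_div, sum_sub_distrib, hedges, sum_product_ite_adj_fst,
    sum_product_ite_adj_snd, fWD, sub_one_mul, sum_const, nsmul_eq_mul, mul_one]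
  ring

end Density

/-- if `x_u < 1/2` for all `u ∈ V`, then the set function
`f_x(S) = |E[S]| - |S| - Σ_{u ∈ S} (d_S(u) - 1) x_u` is supermodular. -/
theorem stmt_16 {V : Type*} [Fintype V] (G : SimpleGraph V)
    (x : V → ℝ) (hx : ∀ u, x u < 1 / 2) (A B : Finset V) :
    fWD G x A + fWD G x B ≤ fWD G x (A ∩ B) + fWD G x (A ∪ B) := by
  have hquad := sum_product_self_add_sum_product_self_le (pairWeight_nonneg G hx) A B
  have hlin : ∑ u ∈ A ∪ B, (x u - 1) + ∑ u ∈ A ∩ B, (x u - 1) =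
      ∑ u ∈ A, (x u - 1) + ∑ u ∈ B, (x u - 1) := sum_union_inter
  simp only [fWD_eq_sum_pairWeight]
  linarith

end FVS
end
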